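/- arXiv:2511.17263 — 6 statements merged into one kernel-verified Lean document; each statement's English description precedes it below -/
import Mathlib

section
/- Let E1 and E2 be disjoint finite sets, τ1 a topology on E1, τ2 a topology on E2, and τ = τ1 ⊕_w τ2 their w-sum. Then τ is a T0 topology on E1 ∪ E2 if and only if both τ1 and τ2 are T0 topologies. -/
/-- A topology on a finite set `E`: a collection of subsets of `E` containing `∅` and `E`,
closed under binary union and binary intersection. -/
def IsTopOn {α : Type*} [DecidableEq α] (E : Finset α) (τ : Finset (Finset α)) : Prop :=
  (∀ O ∈ τ, O ⊆ E) ∧ (∅ : Finset α) ∈ τ ∧ E ∈ τ ∧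
    (∀ A ∈ τ, ∀ B ∈ τ, A ∪ B ∈ τ) ∧ (∀ A ∈ τ, ∀ B ∈ τ, A ∩ B ∈ τ)

/-- A `T0` topology: a topology such that any two distinct points of `E` are separated
by some open set containing exactly one of them. -/
def IsT0On {α : Type*} [DecidableEq α] (E : Finset α) (τ : Finset (Finset α)) : Prop :=
  IsTopOn E τ ∧
    ∀ x ∈ E, ∀ y ∈ E, x ≠ y → ∃ A ∈ τ, (x ∈ A ∧ y ∉ A) ∨ (x ∉ A ∧ y ∈ A)

/-- The w-sum `τ1 ⊕_w τ2 = τ1 ∪ {O ∪ E1 : O ∈ τ2}` of a topology `τ1` on `E1` with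
a topology `τ2` on `E2` (disjoint from `E1`). -/
def wSum {α : Type*} [DecidableEq α] (τ1 τ2 : Finset (Finset α)) (E1 : Finset α) :
    Finset (Finset α) :=
  τ1 ∪ τ2.image (fun O => O ∪ E1)

lemma mem_wSum {α : Type*} [DecidableEq α] {τ1 τ2 : Finset (Finset α)} {E1 : Finset α}
    {A : Finset α} : A ∈ wSum τ1 τ2 E1 ↔ A ∈ τ1 ∨ ∃ O ∈ τ2, O ∪ E1 = A := by
  simp [wSum]

/-- For topologies `τ1` on `E1` and `τ2` on `E2` with `E1 ∩ E2 = ∅`, the w-sum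
`τ1 ⊕_w τ2` is a `T0` topology on `E1 ∪ E2` iff both `τ1` and `τ2` are `T0`. -/
theorem wSum_isT0On_iff {α : Type*} [DecidableEq α]
    (E1 E2 : Finset α) (τ1 τ2 : Finset (Finset α))
    (h1 : IsTopOn E1 τ1) (h2 : IsTopOn E2 τ2) (hdisj : Disjoint E1 E2) :
    IsT0On (E1 ∪ E2) (wSum τ1 τ2 E1) ↔ IsT0On E1 τ1 ∧ IsT0On E2 τ2 := by
  obtain ⟨hsub1, hemp1, hfull1, hun1, hin1⟩ := h1
  obtain ⟨hsub2, hemp2, hfull2, hun2, hin2⟩ := h2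
  have hd : ∀ x ∈ E1, x ∉ E2 := fun x hx hy => (Finset.disjoint_left.mp hdisj) hx hy
  constructor
  · rintro ⟨_, hsep⟩
    refine ⟨⟨⟨hsub1, hemp1, hfull1, hun1, hin1⟩, ?_⟩,
            ⟨⟨hsub2, hemp2, hfull2, hun2, hin2⟩, ?_⟩⟩
    · intro x hx y hy hxy
      obtain ⟨A, hA, hsepA⟩ := hsep x (Finset.mem_union_left _ hx) y
        (Finset.mem_union_left _ hy) hxy
      rcases mem_wSum.mp hA with hA1 | ⟨O, hO, rfl⟩
      · exact ⟨A, hA1, hsepA⟩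
      · rcases hsepA with ⟨_, hyA⟩ | ⟨hxA, _⟩
        · exact absurd (Finset.mem_union_right _ hy) hyA
        · exact absurd (Finset.mem_union_right _ hx) hxA
    · intro x hx y hy hxy
      obtain ⟨A, hA, hsepA⟩ := hsep x (Finset.mem_union_right _ hx) y
        (Finset.mem_union_right _ hy) hxy
      rcases mem_wSum.mp hA with hA1 | ⟨O, hO, rfl⟩
      · rcases hsepA with ⟨hxA, _⟩ | ⟨_, hyA⟩
        · exact absurd (hsub1 A hA1 hxA) (fun h => hd x h hx)
        · exact absurd (hsub1 A hA1 hyA) (fun h => hd y h hy)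
      · refine ⟨O, hO, ?_⟩
        have hx1 : x ∉ E1 := fun h => hd x h hx
        have hy1 : y ∉ E1 := fun h => hd y h hy
        rcases hsepA with ⟨hxA, hyA⟩ | ⟨hxA, hyA⟩
        · exact Or.inl ⟨(Finset.mem_union.mp hxA).resolve_right hx1,
            fun h => hyA (Finset.mem_union_left _ h)⟩
        · exact Or.inr ⟨fun h => hxA (Finset.mem_union_left _ h),
            (Finset.mem_union.mp hyA).resolve_right hy1⟩
  · rintro ⟨⟨_, hsep1⟩, ⟨_, hsep2⟩⟩
    constructor
    · refine ⟨?_, ?_, ?_, ?_, ?_⟩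
      · intro A hA
        rcases mem_wSum.mp hA with hA1 | ⟨O, hO, rfl⟩
        · exact (hsub1 A hA1).trans Finset.subset_union_left
        · exact Finset.union_subset
            ((hsub2 O hO).trans Finset.subset_union_right) Finset.subset_union_left
      · exact mem_wSum.mpr (Or.inl hemp1)
      · exact mem_wSum.mpr (Or.inr ⟨E2, hfull2, Finset.union_comm E2 E1⟩)
      · intro A hA B hB
        rcases mem_wSum.mp hA with hA1 | ⟨O, hO, rfl⟩ <;>
          rcases mem_wSum.mp hB with hB1 | ⟨O', hO', rfl⟩
        · exact mem_wSum.mpr (Or.inl (hun1 A hA1 B hB1))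
        · refine mem_wSum.mpr (Or.inr ⟨O', hO', ?_⟩)
          have : A ⊆ O' ∪ E1 := (hsub1 A hA1).trans Finset.subset_union_right
          exact (Finset.union_eq_right.mpr this).symm
        · refine mem_wSum.mpr (Or.inr ⟨O, hO, ?_⟩)
          have : B ⊆ O ∪ E1 := (hsub1 B hB1).trans Finset.subset_union_right
          exact (Finset.union_eq_left.mpr this).symm
        · refine mem_wSum.mpr (Or.inr ⟨O ∪ O', hun2 O hO O' hO', ?_⟩)
          ext a; simp [Finset.mem_union]; tauto
      · intro A hA B hB
        rcases mem_wSum.mp hA with hA1 | ⟨O, hO, rfl⟩ <;>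
          rcases mem_wSum.mp hB with hB1 | ⟨O', hO', rfl⟩
        · exact mem_wSum.mpr (Or.inl (hin1 A hA1 B hB1))
        · refine mem_wSum.mpr (Or.inl ?_)
          have : A ∩ (O' ∪ E1) = A := by
            ext a
            simp only [Finset.mem_inter, Finset.mem_union, and_iff_left_iff_imp]
            intro haA
            exact Or.inr (hsub1 A hA1 haA)
          rw [this]; exact hA1
        · refine mem_wSum.mpr (Or.inl ?_)
          have : (O ∪ E1) ∩ B = B := by
            ext a
            simp only [Finset.mem_inter, Finset.mem_union, and_iff_right_iff_imp]
            intro haB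
            exact Or.inr (hsub1 B hB1 haB)
          rw [this]; exact hB1
        · refine mem_wSum.mpr (Or.inr ⟨O ∩ O', hin2 O hO O' hO', ?_⟩)
          ext a
          simp only [Finset.mem_union, Finset.mem_inter]
          tauto
    · intro x hx y hy hxy
      rcases Finset.mem_union.mp hx with hx1 | hx2 <;>
        rcases Finset.mem_union.mp hy with hy1 | hy2
      · obtain ⟨A, hA, hsA⟩ := hsep1 x hx1 y hy1 hxy
        exact ⟨A, mem_wSum.mpr (Or.inl hA), hsA⟩
      · exact ⟨E1, mem_wSum.mpr (Or.inl hfull1), Or.inl ⟨hx1, fun h => hd y h hy2⟩⟩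
      · exact ⟨E1, mem_wSum.mpr (Or.inl hfull1), Or.inr ⟨fun h => hd x h hx2, hy1⟩⟩
      · obtain ⟨O, hO, hsO⟩ := hsep2 x hx2 y hy2 hxy
        refine ⟨O ∪ E1, mem_wSum.mpr (Or.inr ⟨O, hO, rfl⟩), ?_⟩
        rcases hsO with ⟨hxO, hyO⟩ | ⟨hxO, hyO⟩
        · exact Or.inl ⟨Finset.mem_union_left _ hxO,
            fun h => (Finset.mem_union.mp h).elim hyO (fun h' => hd y h' hy2)⟩
        · exact Or.inr ⟨fun h => (Finset.mem_union.mp h).elim hxO (fun h' => hd x h' hx2),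
            Finset.mem_union_left _ hyO⟩
end

section
/- Let E1, E2 be disjoint finite sets with |E1| = n, |E2| = m, and F1, F2 disjoint finite sets with |F1| = n, |F2| = m. Let τ_{n1}, τ_{m1}, τ_{n2}, τ_{m2} be topologies on E1, E2, F1, F2 respectively. If the w-sums τ_{n1} ⊕_w τ_{m1} and τ_{n2} ⊕_w τ_{m2} are homeomorphic, then τ_{n1} is homeomorphic to τ_{n2} and τ_{m1} is homeomorphic to τ_{m2}. In other words, the map sending a pair of homeomorphism classes of topologies on n and on m points to the homeomorphism class of their w-sum is injective. -/
/-- A homeomorphism from a topology `τ1` on `E1` to a topology `τ2` on `E2`: a bijection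
from `E1` onto `E2` such that for every `X ⊆ E1`, `φ(X) ∈ τ2 ↔ X ∈ τ1`. -/
def IsHomeo {α β : Type*} [DecidableEq α] [DecidableEq β] (E1 : Finset α) (E2 : Finset β)
    (τ1 : Finset (Finset α)) (τ2 : Finset (Finset β)) (φ : α → β) : Prop :=
  Set.BijOn φ ↑E1 ↑E2 ∧ ∀ X ⊆ E1, (X.image φ ∈ τ2 ↔ X ∈ τ1)

lemma mem_wSum_left {α : Type*} [DecidableEq α] (τ1 τ2 : Finset (Finset α))
    {E1 X : Finset α} (h1 : IsTopOn E1 τ1) (hX : X ⊆ E1) :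
    X ∈ wSum τ1 τ2 E1 ↔ X ∈ τ1 := by
  constructor
  · intro h
    rcases Finset.mem_union.1 h with h | h
    · exact h
    · rcases Finset.mem_image.1 h with ⟨O, _, rfl⟩
      have : O ∪ E1 = E1 := le_antisymm hX Finset.subset_union_right
      rw [this]; exact h1.2.2.1
  · intro h; exact Finset.mem_union_left _ h

lemma mem_wSum_right {α : Type*} [DecidableEq α] (τ1 τ2 : Finset (Finset α))
    {E1 E2 X : Finset α} (h1 : IsTopOn E1 τ1) (h2 : IsTopOn E2 τ2)
    (hd : Disjoint E1 E2) (hX : X ⊆ E2) :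
    X ∪ E1 ∈ wSum τ1 τ2 E1 ↔ X ∈ τ2 := by
  constructor
  · intro h
    rcases Finset.mem_union.1 h with h | h
    · have hXE1 : X ⊆ E1 := (Finset.subset_union_left).trans (h1.1 _ h)
      have : X = ∅ := Finset.eq_empty_of_forall_notMem fun a ha =>
        (Finset.disjoint_left.1 hd (hXE1 ha)) (hX ha)
      rw [this]; exact h2.2.1
    · rcases Finset.mem_image.1 h with ⟨O, hO, heq⟩
      have hOE2 : O ⊆ E2 := h2.1 _ hO
      have : X = O := by
        ext a
        constructor
        · intro ha
          have : a ∈ O ∪ E1 := heq ▸ Finset.mem_union_left _ ha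
          rcases Finset.mem_union.1 this with h' | h'
          · exact h'
          · exact absurd (hX ha) (Finset.disjoint_left.1 hd h')
        · intro ha
          have : a ∈ X ∪ E1 := heq.symm ▸ Finset.mem_union_left _ ha
          rcases Finset.mem_union.1 this with h' | h'
          · exact h'
          · exact absurd (hOE2 ha) (Finset.disjoint_left.1 hd h')
      rw [this]; exact hO
  · intro h
    exact Finset.mem_union_right _ (Finset.mem_image.2 ⟨X, h, rfl⟩)

lemma wSum_comparable {α : Type*} [DecidableEq α] (τ1 τ2 : Finset (Finset α))
    {E1 O : Finset α} (h1 : IsTopOn E1 τ1) (hO : O ∈ wSum τ1 τ2 E1) :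
    O ⊆ E1 ∨ E1 ⊆ O := by
  rcases Finset.mem_union.1 hO with h | h
  · exact Or.inl (h1.1 _ h)
  · rcases Finset.mem_image.1 h with ⟨O', _, rfl⟩
    exact Or.inr Finset.subset_union_right

/-- If the w-sums `τn1 ⊕_w τm1` (on `E1 ∪ E2`) and `τn2 ⊕_w τm2` (on `F1 ∪ F2`) of
topologies on disjoint sets of cardinalities `n` and `m` are homeomorphic, then
`τn1` is homeomorphic to `τn2` and `τm1` is homeomorphic to `τm2`; i.e., the map
sending a pair of homeomorphism classes to the class of the w-sum is injective. -/
theorem wSum_injective {α β : Type*} [DecidableEq α] [DecidableEq β] (n m : ℕ)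
    (E1 E2 : Finset α) (F1 F2 : Finset β)
    (hE : Disjoint E1 E2) (hF : Disjoint F1 F2)
    (hE1 : E1.card = n) (hE2 : E2.card = m) (hF1 : F1.card = n) (hF2 : F2.card = m)
    (τn1 τm1 : Finset (Finset α)) (τn2 τm2 : Finset (Finset β))
    (h1 : IsTopOn E1 τn1) (h2 : IsTopOn E2 τm1)
    (h3 : IsTopOn F1 τn2) (h4 : IsTopOn F2 τm2)
    (hhomeo : ∃ φ : α → β,
      IsHomeo (E1 ∪ E2) (F1 ∪ F2) (wSum τn1 τm1 E1) (wSum τn2 τm2 F1) φ) :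
    (∃ φ : α → β, IsHomeo E1 F1 τn1 τn2 φ) ∧
    (∃ φ : α → β, IsHomeo E2 F2 τm1 τm2 φ) := by
  obtain ⟨φ, hbij, hmem⟩ := hhomeo
  -- injectivity on E1 and E2
  have hinj : Set.InjOn φ ↑(E1 ∪ E2) := hbij.injOn
  have hinj1 : Set.InjOn φ ↑E1 := hinj.mono (by simp [Finset.coe_union])
  have hinj2 : Set.InjOn φ ↑E2 := hinj.mono (by simp [Finset.coe_union])
  -- φ(E1) = F1
  have hE1mem : E1 ∈ wSum τn1 τm1 E1 := Finset.mem_union_left _ h1.2.2.1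
  have hGmem : E1.image φ ∈ wSum τn2 τm2 F1 :=
    (hmem E1 Finset.subset_union_left).2 hE1mem
  have hGcard : (E1.image φ).card = F1.card := by
    rw [Finset.card_image_of_injOn hinj1, hE1, hF1]
  have hGF1 : E1.image φ = F1 := by
    rcases wSum_comparable τn2 τm2 h3 hGmem with h | h
    · exact Finset.eq_of_subset_of_card_le h (le_of_eq hGcard.symm)
    · exact (Finset.eq_of_subset_of_card_le h (le_of_eq hGcard)).symm
  -- φ(E1 ∪ E2) = F1 ∪ F2
  have himtot : (E1 ∪ E2).image φ = F1 ∪ F2 := by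
    apply Finset.coe_injective
    rw [Finset.coe_image]
    exact hbij.image_eq
  -- φ(E2) = F2
  have himE2 : E2.image φ = F2 := by
    have hdisj : Disjoint F1 (E2.image φ) := by
      rw [Finset.disjoint_left]
      rintro y hy1 hy2
      rcases Finset.mem_image.1 hy2 with ⟨a, ha, rfl⟩
      rcases Finset.mem_image.1 (hGF1 ▸ hy1) with ⟨b, hb, hba⟩
      have : b = a := hinj (by simp [hb]) (by simp [ha]) hba
      exact Finset.disjoint_left.1 hE (this ▸ hb) ha
    have h' : F1 ∪ E2.image φ = F1 ∪ F2 := by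
      rw [← himtot, Finset.image_union, hGF1]
    calc E2.image φ = (F1 ∪ E2.image φ) \ F1 := (Finset.union_sdiff_cancel_left hdisj).symm
      _ = (F1 ∪ F2) \ F1 := by rw [h']
      _ = F2 := Finset.union_sdiff_cancel_left hF
  constructor
  · refine ⟨φ, ?_, ?_⟩
    · have := hinj1.bijOn_image
      rwa [show φ '' ↑E1 = ↑F1 by rw [← Finset.coe_image, hGF1]] at this
    · intro X hX
      have hXF : X.image φ ⊆ F1 := hGF1 ▸ Finset.image_subset_image hX
      exact (mem_wSum_left τn2 τm2 h3 hXF).symm.trans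
        ((hmem X (hX.trans Finset.subset_union_left)).trans
          (mem_wSum_left τn1 τm1 h1 hX))
  · refine ⟨φ, ?_, ?_⟩
    · have := hinj2.bijOn_image
      rwa [show φ '' ↑E2 = ↑F2 by rw [← Finset.coe_image, himE2]] at this
    · intro X hX
      have hXF2 : X.image φ ⊆ F2 := himE2 ▸ Finset.image_subset_image hX
      have key : X.image φ ∪ F1 ∈ wSum τn2 τm2 F1 ↔ X ∪ E1 ∈ wSum τn1 τm1 E1 := by
        have := hmem (X ∪ E1)
          (Finset.union_subset (hX.trans Finset.subset_union_right) Finset.subset_union_left)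
        rwa [Finset.image_union, hGF1] at this
      exact (mem_wSum_right τn2 τm2 h3 h4 hF hXF2).symm.trans
        (key.trans (mem_wSum_right τn1 τm1 h1 h2 hE hX))
end

section
/- For all nonnegative integers n and m, f(n + m) ≥ f(n) · f(m), where f(k) is the number of homeomorphism classes of topologies on a k-element set. -/
/-- A topology on `Fin k` (ground set `Finset.univ`). -/
def IsTopOnFin (k : ℕ) (τ : Finset (Finset (Fin k))) : Prop :=
  (∅ : Finset (Fin k)) ∈ τ ∧ (Finset.univ : Finset (Fin k)) ∈ τ ∧
    (∀ A ∈ τ, ∀ B ∈ τ, A ∪ B ∈ τ) ∧ (∀ A ∈ τ, ∀ B ∈ τ, A ∩ B ∈ τ)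

/-- Two topologies on `Fin k` are homeomorphic if some bijection of `Fin k`
carries the open sets of one exactly onto the open sets of the other. -/
def HomeoRel (k : ℕ) (τ1 τ2 : Finset (Finset (Fin k))) : Prop :=
  ∃ φ : Fin k → Fin k, Function.Bijective φ ∧
    ∀ X : Finset (Fin k), (X.image φ ∈ τ2 ↔ X ∈ τ1)

/-- `f k`: the number of homeomorphism classes of topologies on a `k`-element set. -/
noncomputable def numUnlabeledTop (k : ℕ) : ℕ :=
  Nat.card (Quot (fun τ1 τ2 : {τ : Finset (Finset (Fin k)) // IsTopOnFin k τ} =>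
    HomeoRel k τ1.1 τ2.1))

namespace SumTopAux

open Finset

variable {n m : ℕ}

def e1 (n m : ℕ) : Fin n ↪ Fin (n + m) :=
  ⟨Fin.castAdd m, Fin.castAdd_injective n m⟩

def e2 (n m : ℕ) : Fin m ↪ Fin (n + m) :=
  ⟨Fin.natAdd n, fun a b h => by simpa [Fin.ext_iff] using h⟩

def Qs (n m : ℕ) : Finset (Fin (n + m)) := univ.map (e2 n m)

def Ps (n m : ℕ) : Finset (Fin (n + m)) := univ.map (e1 n m)

lemma mem_Qs_iff {x : Fin (n + m)} : x ∈ Qs n m ↔ n ≤ x.val := by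
  constructor
  · rintro hx
    rw [Qs, mem_map] at hx
    obtain ⟨b, -, rfl⟩ := hx
    show n ≤ (Fin.natAdd n b).val; simp
  · intro hx
    rw [Qs, mem_map]
    refine ⟨⟨x.val - n, by omega⟩, mem_univ _, ?_⟩
    apply Fin.ext; show n + (x.val - n) = x.val; omega

lemma mem_Ps_iff {x : Fin (n + m)} : x ∈ Ps n m ↔ x.val < n := by
  constructor
  · rintro hx
    rw [Ps, mem_map] at hx
    obtain ⟨b, -, rfl⟩ := hx
    simp only [e1, Function.Embedding.coeFn_mk, Fin.coe_castAdd]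
    omega
  · intro hx
    rw [Ps, mem_map]
    exact ⟨⟨x.val, hx⟩, mem_univ _, by simp [e1, Fin.ext_iff]⟩

lemma mem_Ps_of_not_Qs {x : Fin (n + m)} (h : x ∉ Qs n m) : x ∈ Ps n m := by
  rw [mem_Qs_iff] at h; rw [mem_Ps_iff]; omega

lemma map_e1_subset_Ps (A : Finset (Fin n)) : A.map (e1 n m) ⊆ Ps n m :=
  map_subset_map.mpr (subset_univ A)

lemma map_e2_subset_Qs (B : Finset (Fin m)) : B.map (e2 n m) ⊆ Qs n m :=
  map_subset_map.mpr (subset_univ B)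

lemma disj_Ps_Qs : Disjoint (Ps n m) (Qs n m) := by
  rw [disjoint_left]
  intro x hx hx'
  rw [mem_Ps_iff] at hx; rw [mem_Qs_iff] at hx'; omega

lemma disj_e1_Qs (A : Finset (Fin n)) : Disjoint (A.map (e1 n m)) (Qs n m) :=
  Disjoint.mono_left (map_e1_subset_Ps A) disj_Ps_Qs

def S (τ : Finset (Finset (Fin n))) (σ : Finset (Finset (Fin m))) :
    Finset (Finset (Fin (n + m))) :=
  σ.image (fun B => B.map (e2 n m)) ∪ τ.image (fun A => A.map (e1 n m) ∪ Qs n m)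

lemma mem_S {τ : Finset (Finset (Fin n))} {σ : Finset (Finset (Fin m))}
    {X : Finset (Fin (n + m))} :
    X ∈ S τ σ ↔ (∃ B ∈ σ, B.map (e2 n m) = X) ∨ ∃ A ∈ τ, A.map (e1 n m) ∪ Qs n m = X := by
  simp [S, mem_union, mem_image]

lemma union_Qs_cancel {A A' : Finset (Fin n)}
    (h : A.map (e1 n m) ∪ Qs n m = A'.map (e1 n m) ∪ Qs n m) : A = A' := by
  have h1 : A.map (e1 n m) = A'.map (e1 n m) := by
    have := congrArg (fun Z => Z \ Qs n m) h
    simpa [union_sdiff_distrib, sdiff_eq_self_of_disjoint (disj_e1_Qs A),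
      sdiff_eq_self_of_disjoint (disj_e1_Qs A')] using this
  exact (Finset.map_injective _) h1

lemma compare_Qs {τ : Finset (Finset (Fin n))} {σ : Finset (Finset (Fin m))}
    {X : Finset (Fin (n + m))} (h : X ∈ S τ σ) : X ⊆ Qs n m ∨ Qs n m ⊆ X := by
  rw [mem_S] at h
  rcases h with ⟨B, -, rfl⟩ | ⟨A, -, rfl⟩
  · exact Or.inl (map_e2_subset_Qs B)
  · exact Or.inr subset_union_right

lemma map_e2_mem {τ : Finset (Finset (Fin n))} {σ : Finset (Finset (Fin m))}
    (hτ : IsTopOnFin n τ) (hσ : IsTopOnFin m σ) {B : Finset (Fin m)} :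
    B.map (e2 n m) ∈ S τ σ ↔ B ∈ σ := by
  rw [mem_S]
  constructor
  · rintro (⟨B', hB', hBB⟩ | ⟨A, hA, hAB⟩)
    · rwa [Finset.map_inj.mp hBB] at hB'
    · have hQ : Qs n m ⊆ B.map (e2 n m) := hAB ▸ subset_union_right
      have : B = univ := by
        apply Finset.map_injective (e2 n m)
        exact subset_antisymm (map_e2_subset_Qs B) hQ
      exact this ▸ hσ.2.1
  · intro hB; exact Or.inl ⟨B, hB, rfl⟩

lemma e1_union_mem {τ : Finset (Finset (Fin n))} {σ : Finset (Finset (Fin m))}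
    (hτ : IsTopOnFin n τ) (hσ : IsTopOnFin m σ) {A : Finset (Fin n)} :
    A.map (e1 n m) ∪ Qs n m ∈ S τ σ ↔ A ∈ τ := by
  rw [mem_S]
  constructor
  · rintro (⟨B, hB, hBB⟩ | ⟨A', hA', hAA⟩)
    · have h1 : A.map (e1 n m) ⊆ Qs n m :=
        (union_subset_iff.mp (hBB ▸ map_e2_subset_Qs B)).1
      have : A = ∅ := by
        apply Finset.map_injective (e1 n m)
        simp only [map_empty]
        exact (disjoint_self).mp (Disjoint.mono_right h1 (disj_e1_Qs A)).symm
      exact this ▸ hτ.1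
    · rwa [union_Qs_cancel hAA] at hA'
  · intro hA; exact Or.inr ⟨A, hA, rfl⟩

lemma S_isTop {τ : Finset (Finset (Fin n))} {σ : Finset (Finset (Fin m))}
    (hτ : IsTopOnFin n τ) (hσ : IsTopOnFin m σ) : IsTopOnFin (n + m) (S τ σ) := by
  refine ⟨?_, ?_, ?_, ?_⟩
  · rw [mem_S]; exact Or.inl ⟨∅, hσ.1, by simp⟩
  · rw [mem_S]
    refine Or.inr ⟨univ, hτ.2.1, ?_⟩
    ext x
    simp only [mem_union, mem_univ, iff_true]
    rcases lt_or_ge x.val n with h | h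
    · exact Or.inl ((mem_Ps_iff).mpr h)
    · exact Or.inr ((mem_Qs_iff).mpr h)
  · intro X hX Y hY
    rw [mem_S] at hX hY ⊢
    rcases hX with ⟨B, hB, rfl⟩ | ⟨A, hA, rfl⟩ <;>
      rcases hY with ⟨B', hB', rfl⟩ | ⟨A', hA', rfl⟩
    · exact Or.inl ⟨B ∪ B', hσ.2.2.1 B hB B' hB', by rw [map_union]⟩
    · exact Or.inr ⟨A', hA',
        (union_eq_right.mpr ((map_e2_subset_Qs B).trans subset_union_right)).symm⟩
    · exact Or.inr ⟨A, hA,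
        (union_eq_left.mpr ((map_e2_subset_Qs B').trans subset_union_right)).symm⟩
    · refine Or.inr ⟨A ∪ A', hτ.2.2.1 A hA A' hA', ?_⟩
      rw [map_union]
      ext x
      simp only [mem_union]
      tauto
  · intro X hX Y hY
    rw [mem_S] at hX hY ⊢
    rcases hX with ⟨B, hB, rfl⟩ | ⟨A, hA, rfl⟩ <;>
      rcases hY with ⟨B', hB', rfl⟩ | ⟨A', hA', rfl⟩
    · exact Or.inl ⟨B ∩ B', hσ.2.2.2 B hB B' hB', by rw [map_inter]⟩
    · refine Or.inl ⟨B, hB, ?_⟩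
      exact (inter_eq_left.mpr ((map_e2_subset_Qs B).trans subset_union_right)).symm
    · refine Or.inl ⟨B', hB', ?_⟩
      exact (inter_eq_right.mpr ((map_e2_subset_Qs B').trans subset_union_right)).symm
    · refine Or.inr ⟨A ∩ A', hτ.2.2.2 A hA A' hA', ?_⟩
      apply subset_antisymm
      · apply subset_inter
        · exact union_subset_union (map_subset_map.mpr inter_subset_left) (Finset.Subset.refl _)
        · exact union_subset_union (map_subset_map.mpr inter_subset_right) (Finset.Subset.refl _)
      · intro x hx
        rw [mem_inter] at hx
        obtain ⟨hx1, hx2⟩ := hx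
        rw [mem_union] at hx1 hx2 ⊢
        rcases hx1 with h1 | h1 <;> rcases hx2 with h2 | h2
        · exact Or.inl (by rw [map_inter, mem_inter]; exact ⟨h1, h2⟩)
        · exact absurd h2 (disjoint_left.mp (disj_e1_Qs A) h1)
        · exact absurd h1 (disjoint_left.mp (disj_e1_Qs A') h2)
        · exact Or.inr h1


lemma e1_ne_e2 (a : Fin n) (b : Fin m) : e1 n m a ≠ e2 n m b := by
  intro h
  have h1 : (Fin.castAdd m a).val = (Fin.natAdd n b).val := congrArg Fin.val h
  rw [Fin.coe_castAdd, Fin.coe_natAdd] at h1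
  omega

lemma cases_e (x : Fin (n + m)) : (∃ a, e1 n m a = x) ∨ ∃ b, e2 n m b = x := by
  rcases lt_or_ge x.val n with h | h
  · refine Or.inl ⟨⟨x.val, h⟩, ?_⟩
    simp only [e1, Function.Embedding.coeFn_mk, Fin.ext_iff, Fin.coe_castAdd]
  · refine Or.inr ⟨⟨x.val - n, by omega⟩, ?_⟩
    apply Fin.ext; show n + (x.val - n) = x.val; omega

lemma exists_restrict {α β : Type*} [Fintype α] [DecidableEq β] {e : α ↪ β} {φ : β → β}
    (h : ∀ a : α, φ (e a) ∈ univ.map e) :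
    ∃ ψ : α → α, ∀ a, e (ψ a) = φ (e a) := by
  refine ⟨fun a => (mem_map.mp (h a)).choose, fun a => ?_⟩
  exact (mem_map.mp (h a)).choose_spec.2

lemma restrict_inj {α β : Type*} {e : α ↪ β} {φ : β → β} {ψ : α → α}
    (h : ∀ a, e (ψ a) = φ (e a)) (hφ : Function.Injective φ) : Function.Injective ψ := by
  intro a b hab
  have h2 : φ (e a) = φ (e b) := by
    rw [← h a, ← h b, hab]
  exact e.injective (hφ h2)

lemma image_map_comm {α β : Type*} [DecidableEq α] [DecidableEq β] {e : α ↪ β} {φ : β → β}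
    {ψ : α → α} (h : ∀ a, e (ψ a) = φ (e a)) (X : Finset α) :
    (X.image ψ).map e = (X.map e).image φ := by
  rw [map_eq_image, map_eq_image, image_image, image_image]
  exact image_congr (fun a _ => h a)

variable {τ τ' : Finset (Finset (Fin n))} {σ σ' : Finset (Finset (Fin m))}

lemma S_homeo (h1 : HomeoRel n τ τ') (h2 : HomeoRel m σ σ') :
    HomeoRel (n + m) (S τ σ) (S τ' σ') := by
  obtain ⟨ψ1, hb1, hi1⟩ := h1
  obtain ⟨ψ2, hb2, hi2⟩ := h2
  set φ : Fin (n + m) → Fin (n + m) :=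
    Fin.addCases (motive := fun _ => Fin (n + m))
      (fun a => e1 n m (ψ1 a)) (fun b => e2 n m (ψ2 b)) with hφdef
  have hφ1 : ∀ a : Fin n, φ (e1 n m a) = e1 n m (ψ1 a) := fun a => Fin.addCases_left a
  have hφ2 : ∀ b : Fin m, φ (e2 n m b) = e2 n m (ψ2 b) := fun b => Fin.addCases_right b
  have hinj : Function.Injective φ := by
    intro x y hxy
    rcases cases_e x with ⟨a, rfl⟩ | ⟨b, rfl⟩ <;> rcases cases_e y with ⟨a', rfl⟩ | ⟨b', rfl⟩
    · rw [hφ1, hφ1] at hxy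
      exact congrArg _ (hb1.1 ((e1 n m).injective hxy))
    · rw [hφ1, hφ2] at hxy
      exact absurd hxy (e1_ne_e2 _ _)
    · rw [hφ2, hφ1] at hxy
      exact absurd hxy.symm (e1_ne_e2 _ _)
    · rw [hφ2, hφ2] at hxy
      exact congrArg _ (hb2.1 ((e2 n m).injective hxy))
  have hbij : Function.Bijective φ := Finite.injective_iff_bijective.mp hinj
  have himgQ : (Qs n m).image φ = Qs n m := by
    apply subset_antisymm
    · intro x hx
      obtain ⟨q, hq, rfl⟩ := mem_image.mp hx
      obtain ⟨b, -, rfl⟩ := mem_map.mp hq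
      rw [hφ2]
      exact mem_map_of_mem _ (mem_univ _)
    · intro x hx
      obtain ⟨b, -, rfl⟩ := mem_map.mp hx
      have hb : ∃ b₀, ψ2 b₀ = b := hb2.2 b
      obtain ⟨b₀, rfl⟩ := hb
      rw [← hφ2]
      exact mem_image_of_mem _ (mem_map_of_mem _ (mem_univ _))
  refine ⟨φ, hbij, fun X => ?_⟩
  constructor
  · intro h
    rcases mem_S.mp h with ⟨B', hB', hEq⟩ | ⟨A', hA', hEq⟩
    · -- X ⊆ Qs
      have hXQ : X ⊆ Qs n m := by
        intro x hx
        rcases cases_e x with ⟨a, rfl⟩ | ⟨b, rfl⟩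
        · exfalso
          have hmem : φ (e1 n m a) ∈ B'.map (e2 n m) := hEq ▸ mem_image_of_mem _ hx
          have hmem2 : φ (e1 n m a) ∈ Qs n m := map_e2_subset_Qs B' hmem
          rw [hφ1] at hmem2
          rw [mem_Qs_iff] at hmem2
          have : ((e1 n m) (ψ1 a)).val < n := by simp [e1]
          omega
        · exact mem_map_of_mem _ (mem_univ _)
      obtain ⟨B, -, rfl⟩ := subset_map_iff.mp hXQ
      rw [← image_map_comm (fun b => (hφ2 b).symm)] at hEq
      have hBB : B' = B.image ψ2 := Finset.map_injective _ hEq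
      rw [hBB] at hB'
      exact mem_S.mpr (Or.inl ⟨B, (hi2 B).mp hB', rfl⟩)
    · -- Qs ⊆ X
      have hQX : Qs n m ⊆ X := by
        intro q hq
        obtain ⟨b, -, rfl⟩ := mem_map.mp hq
        have h1 : φ (e2 n m b) ∈ Qs n m := by
          rw [hφ2]; exact mem_map_of_mem _ (mem_univ _)
        have h2 : φ (e2 n m b) ∈ X.image φ := by
          rw [← hEq]
          exact mem_union_right _ h1
        obtain ⟨x, hx, hxe⟩ := mem_image.mp h2
        rwa [← hinj hxe]
      have hXP : X \ Qs n m ⊆ univ.map (e1 n m) := by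
        intro x hx
        rw [mem_sdiff] at hx
        have := mem_Ps_of_not_Qs hx.2
        rwa [Ps] at this
      obtain ⟨A, -, hAeq⟩ := subset_map_iff.mp hXP
      have hXeq : X = A.map (e1 n m) ∪ Qs n m := by
        rw [← hAeq]
        exact (sdiff_union_of_subset hQX).symm
      rw [hXeq] at hEq ⊢
      rw [image_union, ← image_map_comm (fun a => (hφ1 a).symm), himgQ] at hEq
      have hAA : A' = A.image ψ1 := union_Qs_cancel hEq
      rw [hAA] at hA'
      exact mem_S.mpr (Or.inr ⟨A, (hi1 A).mp hA', rfl⟩)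
  · intro h
    rcases mem_S.mp h with ⟨B, hB, rfl⟩ | ⟨A, hA, rfl⟩
    · refine mem_S.mpr (Or.inl ⟨B.image ψ2, (hi2 B).mpr hB, ?_⟩)
      exact image_map_comm (fun b => (hφ2 b).symm) B
    · refine mem_S.mpr (Or.inr ⟨A.image ψ1, (hi1 A).mpr hA, ?_⟩)
      rw [image_union, ← image_map_comm (fun a => (hφ1 a).symm), himgQ]


lemma homeo_of_S_homeo (hτ : IsTopOnFin n τ) (hτ' : IsTopOnFin n τ')
    (hσ : IsTopOnFin m σ) (hσ' : IsTopOnFin m σ')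
    (h : HomeoRel (n + m) (S τ σ) (S τ' σ')) :
    HomeoRel n τ τ' ∧ HomeoRel m σ σ' := by
  obtain ⟨φ, hbij, hiff⟩ := h
  have hQmem : Qs n m ∈ S τ σ := mem_S.mpr (Or.inl ⟨univ, hσ.2.1, rfl⟩)
  have hQ' : (Qs n m).image φ ∈ S τ' σ' := (hiff _).mpr hQmem
  have hcard : ((Qs n m).image φ).card = (Qs n m).card := card_image_of_injective _ hbij.1
  have himgQ : (Qs n m).image φ = Qs n m := by
    rcases compare_Qs hQ' with hsub | hsub
    · exact eq_of_subset_of_card_le hsub (le_of_eq hcard.symm)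
    · exact (eq_of_subset_of_card_le hsub (le_of_eq hcard)).symm
  have hφ2mem : ∀ b : Fin m, φ (e2 n m b) ∈ univ.map (e2 n m) := by
    intro b
    have h1 : φ (e2 n m b) ∈ (Qs n m).image φ :=
      mem_image_of_mem _ (mem_map_of_mem _ (mem_univ b))
    rw [himgQ] at h1
    exact h1
  have hφ1mem : ∀ a : Fin n, φ (e1 n m a) ∈ univ.map (e1 n m) := by
    intro a
    have hnot : φ (e1 n m a) ∉ Qs n m := by
      intro hc
      rw [← himgQ] at hc
      obtain ⟨q, hq, hq'⟩ := mem_image.mp hc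
      rw [hbij.1 hq', mem_Qs_iff] at hq
      have h2 : ((e1 n m) a).val < n := by
        simp only [e1, Function.Embedding.coeFn_mk, Fin.coe_castAdd]
        exact a.isLt
      omega
    have := mem_Ps_of_not_Qs hnot
    rwa [Ps] at this
  obtain ⟨ψ1, hψ1⟩ := exists_restrict hφ1mem
  obtain ⟨ψ2, hψ2⟩ := exists_restrict hφ2mem
  have hinj1 := restrict_inj hψ1 hbij.1
  have hinj2 := restrict_inj hψ2 hbij.1
  constructor
  · refine ⟨ψ1, Finite.injective_iff_bijective.mp hinj1, fun A => ?_⟩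
    have him : (A.image ψ1).map (e1 n m) ∪ Qs n m = (A.map (e1 n m) ∪ Qs n m).image φ := by
      rw [image_union, ← image_map_comm hψ1, himgQ]
    have key : ((A.image ψ1).map (e1 n m) ∪ Qs n m ∈ S τ' σ') ↔
        (A.map (e1 n m) ∪ Qs n m ∈ S τ σ) := by
      rw [him]
      exact hiff _
    rw [e1_union_mem hτ' hσ', e1_union_mem hτ hσ] at key
    exact key
  · refine ⟨ψ2, Finite.injective_iff_bijective.mp hinj2, fun B => ?_⟩
    have key : ((B.image ψ2).map (e2 n m) ∈ S τ' σ') ↔ (B.map (e2 n m) ∈ S τ σ) := by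
      rw [image_map_comm hψ2]
      exact hiff _
    rw [map_e2_mem hτ' hσ', map_e2_mem hτ hσ] at key
    exact key

lemma homeo_refl {k : ℕ} (τ : Finset (Finset (Fin k))) : HomeoRel k τ τ :=
  ⟨id, Function.bijective_id, fun X => by simp⟩

lemma homeo_symm {k : ℕ} {τ1 τ2 : Finset (Finset (Fin k))} (h : HomeoRel k τ1 τ2) :
    HomeoRel k τ2 τ1 := by
  obtain ⟨φ, hb, hi⟩ := h
  let e := Equiv.ofBijective φ hb
  refine ⟨e.symm, e.symm.bijective, fun X => ?_⟩
  have key := hi (X.image e.symm)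
  rw [image_image] at key
  have hco : φ ∘ ⇑e.symm = id := by
    funext x
    exact e.apply_symm_apply x
  rw [hco, image_id] at key
  exact key.symm

lemma homeo_trans {k : ℕ} {τ1 τ2 τ3 : Finset (Finset (Fin k))}
    (h12 : HomeoRel k τ1 τ2) (h23 : HomeoRel k τ2 τ3) : HomeoRel k τ1 τ3 := by
  obtain ⟨φ, hb, hi⟩ := h12
  obtain ⟨φ', hb', hi'⟩ := h23
  refine ⟨φ' ∘ φ, hb'.comp hb, fun X => ?_⟩
  rw [← image_image]
  exact (hi' _).trans (hi _)

abbrev TT (k : ℕ) := {τ : Finset (Finset (Fin k)) // IsTopOnFin k τ}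

abbrev RR (k : ℕ) : TT k → TT k → Prop := fun τ1 τ2 => HomeoRel k τ1.1 τ2.1

lemma RR_equiv (k : ℕ) : Equivalence (RR k) :=
  ⟨fun τ => homeo_refl τ.1, homeo_symm, homeo_trans⟩

def g (n m : ℕ) : Quot (RR n) → Quot (RR m) → Quot (RR (n + m)) :=
  Quot.lift
    (fun τ => Quot.lift
      (fun σ => Quot.mk (RR (n + m)) ⟨S τ.1 σ.1, S_isTop τ.2 σ.2⟩)
      (fun σ σ' h => Quot.sound (S_homeo (homeo_refl τ.1) h)))
    (fun τ τ' h => by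
      funext q
      induction q using Quot.ind with
      | _ σ => exact Quot.sound (S_homeo h (homeo_refl σ.1)))

lemma g_injective (n m : ℕ) :
    Function.Injective (fun p : Quot (RR n) × Quot (RR m) => g n m p.1 p.2) := by
  rintro ⟨q1, q2⟩ ⟨q1', q2'⟩ h
  obtain ⟨τ, rfl⟩ := Quot.exists_rep q1
  obtain ⟨σ, rfl⟩ := Quot.exists_rep q2
  obtain ⟨τ', rfl⟩ := Quot.exists_rep q1'
  obtain ⟨σ', rfl⟩ := Quot.exists_rep q2'
  have h3 : RR (n + m) ⟨S τ.1 σ.1, S_isTop τ.2 σ.2⟩ ⟨S τ'.1 σ'.1, S_isTop τ'.2 σ'.2⟩ :=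
    ((RR_equiv (n + m)).eqvGen_iff).mp (Quot.eq.mp h)
  obtain ⟨hτ, hσ⟩ := homeo_of_S_homeo τ.2 τ'.2 σ.2 σ'.2 h3
  exact Prod.ext (Quot.sound hτ) (Quot.sound hσ)

end SumTopAux

/-- Super-multiplicativity for unlabeled topologies: `f(n + m) ≥ f(n) · f(m)`. -/
theorem numUnlabeledTop_supermultiplicative (n m : ℕ) :
    numUnlabeledTop (n + m) ≥ numUnlabeledTop n * numUnlabeledTop m := by
  unfold numUnlabeledTop
  have key := Nat.card_le_card_of_injective _ (SumTopAux.g_injective n m)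
  calc Nat.card (Quot (SumTopAux.RR n)) * Nat.card (Quot (SumTopAux.RR m))
      = Nat.card (Quot (SumTopAux.RR n) × Quot (SumTopAux.RR m)) := (Nat.card_prod _ _).symm
    _ ≤ Nat.card (Quot (SumTopAux.RR (n + m))) := key
end

section
/- For all nonnegative integers n and m, f₀(n + m) ≥ f₀(n) · f₀(m), where f₀(k) is the number of homeomorphism classes of T0 topologies on a k-element set. -/
/-- A `T0` topology on `Fin k`. -/
def IsT0OnFin (k : ℕ) (τ : Finset (Finset (Fin k))) : Prop :=
  IsTopOnFin k τ ∧
    ∀ x y : Fin k, x ≠ y → ∃ A ∈ τ, (x ∈ A ∧ y ∉ A) ∨ (x ∉ A ∧ y ∈ A)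

/-- `f₀ k`: the number of homeomorphism classes of `T0` topologies on a `k`-element set. -/
noncomputable def numUnlabeledT0 (k : ℕ) : ℕ :=
  Nat.card (Quot (fun τ1 τ2 : {τ : Finset (Finset (Fin k)) // IsT0OnFin k τ} =>
    HomeoRel k τ1.1 τ2.1))

namespace SupermulAux

variable {n m : ℕ}

/-! ### low/high decomposition of subsets of `Fin (n+m)` -/

def lowF (n m : ℕ) (X : Finset (Fin (n + m))) : Finset (Fin n) :=
  Finset.univ.filter (fun a => Fin.castAdd m a ∈ X)

def highF (n m : ℕ) (X : Finset (Fin (n + m))) : Finset (Fin m) :=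
  Finset.univ.filter (fun b => Fin.natAdd n b ∈ X)

def bigF (n m : ℕ) (A : Finset (Fin n)) (B : Finset (Fin m)) : Finset (Fin (n + m)) :=
  A.image (Fin.castAdd m) ∪ B.image (Fin.natAdd n)

lemma mem_lowF {X : Finset (Fin (n + m))} {a : Fin n} :
    a ∈ lowF n m X ↔ Fin.castAdd m a ∈ X := by simp [lowF]

lemma mem_highF {X : Finset (Fin (n + m))} {b : Fin m} :
    b ∈ highF n m X ↔ Fin.natAdd n b ∈ X := by simp [highF]

lemma castAdd_ne_natAdd (a : Fin n) (b : Fin m) :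
    Fin.castAdd m a ≠ Fin.natAdd n b := by
  intro h
  have := congrArg Fin.val h
  simp only [Fin.coe_castAdd, Fin.coe_natAdd] at this
  omega

lemma castAdd_inj {a a' : Fin n} (h : Fin.castAdd m a = Fin.castAdd m a') : a = a' := by
  have := congrArg Fin.val h
  simp only [Fin.coe_castAdd] at this
  exact Fin.ext this

lemma natAdd_inj {b b' : Fin m} (h : Fin.natAdd n b = Fin.natAdd n b') : b = b' := by
  have := congrArg Fin.val h
  simp only [Fin.coe_natAdd] at this
  exact Fin.ext (by omega)

lemma cases_big (z : Fin (n + m)) :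
    (∃ a : Fin n, z = Fin.castAdd m a) ∨ (∃ b : Fin m, z = Fin.natAdd n b) := by
  by_cases h : (z : ℕ) < n
  · exact Or.inl ⟨⟨z, h⟩, Fin.ext (by simp)⟩
  · refine Or.inr ⟨⟨(z : ℕ) - n, by have := z.isLt; omega⟩, Fin.ext ?_⟩
    simp only [Fin.coe_natAdd]
    omega

lemma mem_lowF_castAdd {X : Finset (Fin (n + m))} {a : Fin n} :
    Fin.castAdd m a ∈ X ↔ a ∈ lowF n m X := mem_lowF.symm

lemma lowF_bigF (A : Finset (Fin n)) (B : Finset (Fin m)) : lowF n m (bigF n m A B) = A := by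
  ext a
  simp only [mem_lowF, bigF, Finset.mem_union, Finset.mem_image]
  constructor
  · rintro (⟨a', ha', h⟩ | ⟨b, hb, h⟩)
    · rwa [← castAdd_inj h]
    · exact absurd h.symm (castAdd_ne_natAdd a b)
  · exact fun h => Or.inl ⟨a, h, rfl⟩

lemma highF_bigF (A : Finset (Fin n)) (B : Finset (Fin m)) : highF n m (bigF n m A B) = B := by
  ext b
  simp only [mem_highF, bigF, Finset.mem_union, Finset.mem_image]
  constructor
  · rintro (⟨a, ha, h⟩ | ⟨b', hb', h⟩)
    · exact absurd h (castAdd_ne_natAdd a b)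
    · rwa [← natAdd_inj h]
  · exact fun h => Or.inr ⟨b, h, rfl⟩

lemma eqF {X Y : Finset (Fin (n + m))} (hl : lowF n m X = lowF n m Y)
    (hh : highF n m X = highF n m Y) : X = Y := by
  ext z
  rcases cases_big z with ⟨a, rfl⟩ | ⟨b, rfl⟩
  · rw [mem_lowF_castAdd, hl, mem_lowF]
  · rw [show (Fin.natAdd n b ∈ X) = (b ∈ highF n m X) from (propext mem_highF).symm, hh, mem_highF]

lemma subsetF {X Y : Finset (Fin (n + m))} (hl : lowF n m X ⊆ lowF n m Y)
    (hh : highF n m X ⊆ highF n m Y) : X ⊆ Y := by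
  intro z hz
  rcases cases_big z with ⟨a, rfl⟩ | ⟨b, rfl⟩
  · exact mem_lowF.mp (hl (mem_lowF.mpr hz))
  · exact mem_highF.mp (hh (mem_highF.mpr hz))

lemma lowF_union (X Y : Finset (Fin (n + m))) :
    lowF n m (X ∪ Y) = lowF n m X ∪ lowF n m Y := by
  ext a; simp [mem_lowF]

lemma lowF_inter (X Y : Finset (Fin (n + m))) :
    lowF n m (X ∩ Y) = lowF n m X ∩ lowF n m Y := by
  ext a; simp [mem_lowF]

lemma highF_union (X Y : Finset (Fin (n + m))) :
    highF n m (X ∪ Y) = highF n m X ∪ highF n m Y := by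
  ext b; simp [mem_highF]

lemma highF_inter (X Y : Finset (Fin (n + m))) :
    highF n m (X ∩ Y) = highF n m X ∩ highF n m Y := by
  ext b; simp [mem_highF]

lemma lowF_empty : lowF n m ∅ = ∅ := by ext a; simp [mem_lowF]
lemma highF_empty : highF n m ∅ = ∅ := by ext b; simp [mem_highF]
lemma lowF_univ : lowF n m Finset.univ = Finset.univ := by ext a; simp [mem_lowF]
lemma highF_univ : highF n m Finset.univ = Finset.univ := by ext b; simp [mem_highF]

/-! ### the ordinal-sum topology -/

def joinF (n m : ℕ) (τ : Finset (Finset (Fin n))) (σ : Finset (Finset (Fin m))) :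
    Finset (Finset (Fin (n + m))) :=
  Finset.univ.filter (fun X =>
    (highF n m X = Finset.univ ∧ lowF n m X ∈ τ) ∨ (lowF n m X = ∅ ∧ highF n m X ∈ σ))

lemma mem_joinF {τ : Finset (Finset (Fin n))} {σ : Finset (Finset (Fin m))}
    {X : Finset (Fin (n + m))} :
    X ∈ joinF n m τ σ ↔
      (highF n m X = Finset.univ ∧ lowF n m X ∈ τ) ∨ (lowF n m X = ∅ ∧ highF n m X ∈ σ) := by
  simp [joinF]

lemma joinF_isT0 {τ : Finset (Finset (Fin n))} {σ : Finset (Finset (Fin m))}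
    (hτ : IsT0OnFin n τ) (hσ : IsT0OnFin m σ) : IsT0OnFin (n + m) (joinF n m τ σ) := by
  obtain ⟨⟨hτe, hτu, hτun, hτin⟩, hτ0⟩ := hτ
  obtain ⟨⟨hσe, hσu, hσun, hσin⟩, hσ0⟩ := hσ
  refine ⟨⟨?_, ?_, ?_, ?_⟩, ?_⟩
  · exact mem_joinF.mpr (Or.inr ⟨lowF_empty, by rw [highF_empty]; exact hσe⟩)
  · exact mem_joinF.mpr (Or.inl ⟨highF_univ, by rw [lowF_univ]; exact hτu⟩)
  · intro A hA B hB
    rw [mem_joinF] at hA hB ⊢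
    rw [lowF_union, highF_union]
    rcases hA with ⟨hA1, hA2⟩ | ⟨hA1, hA2⟩ <;> rcases hB with ⟨hB1, hB2⟩ | ⟨hB1, hB2⟩
    · exact Or.inl ⟨by rw [hA1]; simp, hτun _ hA2 _ hB2⟩
    · exact Or.inl ⟨by rw [hA1]; simp, by rw [hB1, Finset.union_empty]; exact hA2⟩
    · exact Or.inl ⟨by rw [hB1]; simp, by rw [hA1, Finset.empty_union]; exact hB2⟩
    · exact Or.inr ⟨by rw [hA1, hB1]; simp, hσun _ hA2 _ hB2⟩
  · intro A hA B hB
    rw [mem_joinF] at hA hB ⊢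
    rw [lowF_inter, highF_inter]
    rcases hA with ⟨hA1, hA2⟩ | ⟨hA1, hA2⟩ <;> rcases hB with ⟨hB1, hB2⟩ | ⟨hB1, hB2⟩
    · exact Or.inl ⟨by rw [hA1, hB1]; simp, hτin _ hA2 _ hB2⟩
    · exact Or.inr ⟨by rw [hB1, Finset.inter_empty], by rw [hA1, Finset.univ_inter]; exact hB2⟩
    · exact Or.inr ⟨by rw [hA1, Finset.empty_inter], by rw [hB1, Finset.inter_univ]; exact hA2⟩
    · exact Or.inr ⟨by rw [hA1]; simp, hσin _ hA2 _ hB2⟩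
  · intro x y hxy
    rcases cases_big x with ⟨a, rfl⟩ | ⟨b, rfl⟩ <;> rcases cases_big y with ⟨a', rfl⟩ | ⟨b', rfl⟩
    · obtain ⟨A, hA, hsep⟩ := hτ0 a a' (fun h => hxy (by rw [h]))
      refine ⟨bigF n m A Finset.univ, mem_joinF.mpr (Or.inl ⟨highF_bigF _ _, by
        rw [lowF_bigF]; exact hA⟩), ?_⟩
      rw [mem_lowF_castAdd, mem_lowF_castAdd, lowF_bigF]
      exact hsep
    · refine ⟨bigF n m ∅ Finset.univ, mem_joinF.mpr (Or.inr ⟨lowF_bigF _ _, by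
        rw [highF_bigF]; exact hσu⟩), Or.inr ⟨?_, ?_⟩⟩
      · rw [mem_lowF_castAdd, lowF_bigF]; simp
      · rw [show (Fin.natAdd n b' ∈ bigF n m ∅ Finset.univ) ↔
          (b' ∈ highF n m (bigF n m ∅ Finset.univ)) from mem_highF.symm, highF_bigF]; simp
    · refine ⟨bigF n m ∅ Finset.univ, mem_joinF.mpr (Or.inr ⟨lowF_bigF _ _, by
        rw [highF_bigF]; exact hσu⟩), Or.inl ⟨?_, ?_⟩⟩
      · rw [show (Fin.natAdd n b ∈ bigF n m ∅ Finset.univ) ↔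
          (b ∈ highF n m (bigF n m ∅ Finset.univ)) from mem_highF.symm, highF_bigF]; simp
      · rw [mem_lowF_castAdd, lowF_bigF]; simp
    · obtain ⟨B, hB, hsep⟩ := hσ0 b b' (fun h => hxy (by rw [h]))
      refine ⟨bigF n m ∅ B, mem_joinF.mpr (Or.inr ⟨lowF_bigF _ _, by
        rw [highF_bigF]; exact hB⟩), ?_⟩
      rw [show (Fin.natAdd n b ∈ bigF n m ∅ B) ↔ (b ∈ highF n m (bigF n m ∅ B)) from
        mem_highF.symm, show (Fin.natAdd n b' ∈ bigF n m ∅ B) ↔ (b' ∈ highF n m (bigF n m ∅ B))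
        from mem_highF.symm, highF_bigF]
      exact hsep

/-! ### images under intertwining bijections -/

lemma lowF_image {Φ : Fin (n + m) → Fin (n + m)} {φ : Fin n → Fin n} {ψ : Fin m → Fin m}
    (hc : ∀ a, Φ (Fin.castAdd m a) = Fin.castAdd m (φ a))
    (hn : ∀ b, Φ (Fin.natAdd n b) = Fin.natAdd n (ψ b)) (X : Finset (Fin (n + m))) :
    lowF n m (X.image Φ) = (lowF n m X).image φ := by
  ext a'
  simp only [mem_lowF, Finset.mem_image]
  constructor
  · rintro ⟨z, hz, hΦz⟩
    rcases cases_big z with ⟨a, rfl⟩ | ⟨b, rfl⟩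
    · rw [hc] at hΦz
      exact ⟨a, hz, castAdd_inj hΦz⟩
    · rw [hn] at hΦz
      exact absurd hΦz.symm (castAdd_ne_natAdd _ _)
  · rintro ⟨a, ha, rfl⟩
    exact ⟨Fin.castAdd m a, ha, hc a⟩

lemma highF_image {Φ : Fin (n + m) → Fin (n + m)} {φ : Fin n → Fin n} {ψ : Fin m → Fin m}
    (hc : ∀ a, Φ (Fin.castAdd m a) = Fin.castAdd m (φ a))
    (hn : ∀ b, Φ (Fin.natAdd n b) = Fin.natAdd n (ψ b)) (X : Finset (Fin (n + m))) :
    highF n m (X.image Φ) = (highF n m X).image ψ := by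
  ext b'
  simp only [mem_highF, Finset.mem_image]
  constructor
  · rintro ⟨z, hz, hΦz⟩
    rcases cases_big z with ⟨a, rfl⟩ | ⟨b, rfl⟩
    · rw [hc] at hΦz
      exact absurd hΦz (castAdd_ne_natAdd _ _)
    · rw [hn] at hΦz
      exact ⟨b, hz, natAdd_inj hΦz⟩
  · rintro ⟨b, hb, rfl⟩
    exact ⟨Fin.natAdd n b, hb, hn b⟩

lemma image_eq_univ_iff {k : ℕ} {ψ : Fin k → Fin k} (hψ : Function.Bijective ψ)
    {B : Finset (Fin k)} : B.image ψ = Finset.univ ↔ B = Finset.univ := by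
  constructor
  · intro h
    apply Finset.eq_univ_of_card
    have := congrArg Finset.card h
    rwa [Finset.card_image_of_injective _ hψ.1] at this
  · rintro rfl
    exact Finset.image_univ_of_surjective hψ.2

/-- The key membership transfer lemma. -/
lemma image_mem_joinF_iff {τ τ' : Finset (Finset (Fin n))} {σ σ' : Finset (Finset (Fin m))}
    (hτe : (∅ : Finset (Fin n)) ∈ τ) (hτe' : (∅ : Finset (Fin n)) ∈ τ')
    {Φ : Fin (n + m) → Fin (n + m)} {φ : Fin n → Fin n} {ψ : Fin m → Fin m}
    (hφ : Function.Bijective φ) (hψ : Function.Bijective ψ)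
    (hc : ∀ a, Φ (Fin.castAdd m a) = Fin.castAdd m (φ a))
    (hn : ∀ b, Φ (Fin.natAdd n b) = Fin.natAdd n (ψ b))
    (hτ : ∀ A : Finset (Fin n), A.image φ ∈ τ' ↔ A ∈ τ)
    (hσ : ∀ B : Finset (Fin m), B.image ψ ∈ σ' ↔ B ∈ σ)
    (X : Finset (Fin (n + m))) : X.image Φ ∈ joinF n m τ' σ' ↔ X ∈ joinF n m τ σ := by
  rw [mem_joinF, mem_joinF, lowF_image hc hn, highF_image hc hn,
    image_eq_univ_iff hψ, Finset.image_eq_empty, hτ, hσ]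

/-! ### forward direction: join respects homeomorphism -/

lemma homeo_fwd {τ τ' : Finset (Finset (Fin n))} {σ σ' : Finset (Finset (Fin m))}
    (hτe : (∅ : Finset (Fin n)) ∈ τ) (hτe' : (∅ : Finset (Fin n)) ∈ τ')
    (h1 : HomeoRel n τ τ') (h2 : HomeoRel m σ σ') :
    HomeoRel (n + m) (joinF n m τ σ) (joinF n m τ' σ') := by
  obtain ⟨φ, hφ, hτh⟩ := h1
  obtain ⟨ψ, hψ, hσh⟩ := h2
  refine ⟨fun z => Fin.addCases (motive := fun _ => Fin (n + m))
    (fun a => Fin.castAdd m (φ a)) (fun b => Fin.natAdd n (ψ b)) z, ?_, ?_⟩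
  case refine_2 =>
    intro X
    exact image_mem_joinF_iff hτe hτe' hφ hψ
      (fun a => Fin.addCases_left a) (fun b => Fin.addCases_right b) hτh hσh X
  case refine_1 =>
    rw [← Finite.injective_iff_bijective]
    intro z w h
    rcases cases_big z with ⟨a, rfl⟩ | ⟨b, rfl⟩ <;>
      rcases cases_big w with ⟨a', rfl⟩ | ⟨b', rfl⟩ <;>
      simp only [Fin.addCases_left, Fin.addCases_right] at h
    · exact congrArg (Fin.castAdd m) (hφ.1 (castAdd_inj h))
    · exact absurd h (castAdd_ne_natAdd _ _)
    · exact absurd h.symm (castAdd_ne_natAdd _ _)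
    · exact congrArg (Fin.natAdd n) (hψ.1 (natAdd_inj h))

/-! ### backward direction: recovering the factors -/

lemma homeo_back {τ τ' : Finset (Finset (Fin n))} {σ σ' : Finset (Finset (Fin m))}
    (hτ : IsTopOnFin n τ) (hσ : IsTopOnFin m σ)
    (hτ' : IsTopOnFin n τ') (hσ' : IsTopOnFin m σ')
    (h : HomeoRel (n + m) (joinF n m τ σ) (joinF n m τ' σ')) :
    HomeoRel n τ τ' ∧ HomeoRel m σ σ' := by
  obtain ⟨Φ, hΦb, hΦ⟩ := h
  set U : Finset (Fin (n + m)) := bigF n m ∅ Finset.univ with hUdef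
  have hnatinj : Function.Injective (Fin.natAdd n : Fin m → Fin (n + m)) :=
    fun _ _ h => natAdd_inj h
  have hcastU : ∀ a : Fin n, Fin.castAdd m a ∉ U := by
    intro a h
    rw [mem_lowF_castAdd, lowF_bigF] at h
    simp at h
  have hnatU : ∀ b : Fin m, Fin.natAdd n b ∈ U := by
    intro b
    rw [show (Fin.natAdd n b ∈ U) ↔ (b ∈ highF n m U) from mem_highF.symm, hUdef, highF_bigF]
    simp
  have hUmem : U ∈ joinF n m τ σ :=
    mem_joinF.mpr (Or.inr ⟨lowF_bigF _ _, by rw [highF_bigF]; exact hσ.2.1⟩)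
  have hcomp : ∀ X ∈ joinF n m τ' σ', X ⊆ U ∨ U ⊆ X := by
    intro X hX
    rcases mem_joinF.mp hX with ⟨h1, _⟩ | ⟨h1, _⟩
    · refine Or.inr (subsetF ?_ ?_)
      · rw [hUdef, lowF_bigF]; exact Finset.empty_subset _
      · rw [h1]; exact Finset.subset_univ _
    · refine Or.inl (subsetF ?_ ?_)
      · rw [h1]; exact Finset.empty_subset _
      · rw [hUdef, highF_bigF]; exact Finset.subset_univ _
  have hcardim : (U.image Φ).card = U.card := Finset.card_image_of_injective _ hΦb.1
  have hUU : U.image Φ = U := by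
    rcases hcomp _ ((hΦ U).mpr hUmem) with h | h
    · exact Finset.eq_of_subset_of_card_le h (le_of_eq hcardim.symm)
    · exact (Finset.eq_of_subset_of_card_le h (le_of_eq hcardim)).symm
  have hmemU : ∀ z, Φ z ∈ U ↔ z ∈ U := by
    intro z
    constructor
    · intro h
      rw [← hUU] at h
      obtain ⟨u, hu, he⟩ := Finset.mem_image.mp h
      rwa [← hΦb.1 he]
    · intro h
      rw [← hUU]
      exact Finset.mem_image_of_mem _ h
  have hUval : ∀ z : Fin (n + m), z ∈ U ↔ n ≤ (z : ℕ) := by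
    intro z
    rcases cases_big z with ⟨a, rfl⟩ | ⟨b, rfl⟩
    · exact iff_of_false (hcastU a) (by have := a.isLt; simp only [Fin.coe_castAdd]; omega)
    · exact iff_of_true (hnatU b) (by simp [Fin.coe_natAdd])
  have hlowval : ∀ a : Fin n, (Φ (Fin.castAdd m a) : ℕ) < n := by
    intro a
    have h1 : Φ (Fin.castAdd m a) ∉ U := fun h => hcastU a ((hmemU _).mp h)
    have h2 : ¬ n ≤ (Φ (Fin.castAdd m a) : ℕ) := fun hle => h1 ((hUval _).mpr hle)
    omega
  have hhighval : ∀ b : Fin m, n ≤ (Φ (Fin.natAdd n b) : ℕ) :=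
    fun b => (hUval _).mp ((hmemU _).mpr (hnatU b))
  set φ : Fin n → Fin n := fun a => ⟨(Φ (Fin.castAdd m a) : ℕ), hlowval a⟩ with hφdef
  set ψ : Fin m → Fin m := fun b => ⟨(Φ (Fin.natAdd n b) : ℕ) - n, by
    have := (Φ (Fin.natAdd n b)).isLt; have := hhighval b; omega⟩ with hψdef
  have hc : ∀ a, Φ (Fin.castAdd m a) = Fin.castAdd m (φ a) :=
    fun a => Fin.ext (by simp [hφdef])
  have hn2 : ∀ b, Φ (Fin.natAdd n b) = Fin.natAdd n (ψ b) := by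
    intro b
    refine Fin.ext ?_
    simp only [hψdef, Fin.coe_natAdd]
    have := hhighval b
    omega
  have hφinj : Function.Injective φ := by
    intro a a' h
    exact castAdd_inj (hΦb.1 (by rw [hc, hc, h]))
  have hψinj : Function.Injective ψ := by
    intro b b' h
    exact natAdd_inj (hΦb.1 (by rw [hn2, hn2, h]))
  have hφbij : Function.Bijective φ := Finite.injective_iff_bijective.mp hφinj
  have hψbij : Function.Bijective ψ := Finite.injective_iff_bijective.mp hψinj
  constructor
  · refine ⟨φ, hφbij, ?_⟩
    intro A
    have h1 := hΦ (bigF n m A Finset.univ)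
    rw [mem_joinF, mem_joinF, lowF_image hc hn2, highF_image hc hn2, lowF_bigF, highF_bigF,
      Finset.image_univ_of_surjective hψbij.2, Finset.image_eq_empty] at h1
    simp only [true_and, and_true, eq_self_iff_true] at h1
    constructor
    · intro h
      rcases h1.mp (Or.inl h) with h2 | ⟨rfl, _⟩
      · exact h2
      · exact hτ.1
    · intro h
      rcases h1.mpr (Or.inl h) with h2 | ⟨he, _⟩
      · exact h2
      · rw [he, Finset.image_empty]
        exact hτ'.1
  · refine ⟨ψ, hψbij, ?_⟩
    intro B
    have h1 := hΦ (bigF n m ∅ B)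
    rw [mem_joinF, mem_joinF, lowF_image hc hn2, highF_image hc hn2, lowF_bigF, highF_bigF,
      Finset.image_empty, image_eq_univ_iff hψbij] at h1
    simp only [true_and, and_true, eq_self_iff_true, hτ.1, hτ'.1] at h1
    by_cases hBu : B = Finset.univ
    · subst hBu
      rw [Finset.image_univ_of_surjective hψbij.2]
      exact iff_of_true hσ'.2.1 hσ.2.1
    · constructor
      · intro h
        rcases h1.mp (Or.inr h) with h2 | h2
        · exact absurd h2 hBu
        · exact h2
      · intro h
        rcases h1.mpr (Or.inr h) with h2 | h2
        · exact absurd h2 hBu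
        · exact h2

/-! ### `HomeoRel` is an equivalence relation -/

lemma homeo_refl (k : ℕ) (τ : Finset (Finset (Fin k))) : HomeoRel k τ τ :=
  ⟨id, Function.bijective_id, fun X => by simp⟩

lemma homeo_symm {k : ℕ} {τ1 τ2 : Finset (Finset (Fin k))} (h : HomeoRel k τ1 τ2) :
    HomeoRel k τ2 τ1 := by
  obtain ⟨φ, hφ, hh⟩ := h
  refine ⟨(Equiv.ofBijective φ hφ).symm, (Equiv.ofBijective φ hφ).symm.bijective, fun X => ?_⟩
  have := hh (X.image (Equiv.ofBijective φ hφ).symm)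
  rw [Finset.image_image] at this
  have heq : φ ∘ ((Equiv.ofBijective φ hφ).symm : Fin k → Fin k) = id := by
    funext x
    exact (Equiv.ofBijective φ hφ).apply_symm_apply x
  rw [heq, Finset.image_id] at this
  exact this.symm


lemma homeo_trans {k : ℕ} {τ1 τ2 τ3 : Finset (Finset (Fin k))}
    (h : HomeoRel k τ1 τ2) (h' : HomeoRel k τ2 τ3) : HomeoRel k τ1 τ3 := by
  obtain ⟨φ, hφ, hh⟩ := h
  obtain ⟨φ', hφ', hh'⟩ := h'
  refine ⟨φ' ∘ φ, hφ'.comp hφ, fun X => ?_⟩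
  rw [← Finset.image_image]
  rw [hh', hh]

end SupermulAux

open SupermulAux in
/-- Super-multiplicativity for unlabeled `T0` topologies: `f₀(n + m) ≥ f₀(n) · f₀(m)`. -/
theorem numUnlabeledT0_supermultiplicative (n m : ℕ) :
    numUnlabeledT0 (n + m) ≥ numUnlabeledT0 n * numUnlabeledT0 m := by
  classical
  set R : ∀ k, {τ : Finset (Finset (Fin k)) // IsT0OnFin k τ} →
      {τ : Finset (Finset (Fin k)) // IsT0OnFin k τ} → Prop :=
    fun k τ1 τ2 => HomeoRel k τ1.1 τ2.1 with hR
  have hequiv : ∀ k, Equivalence (R k) :=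
    fun k => ⟨fun τ => homeo_refl k τ.1, fun h => homeo_symm h, fun h h' => homeo_trans h h'⟩
  -- the join as a map on T0 spaces
  let J : {τ : Finset (Finset (Fin n)) // IsT0OnFin n τ} →
      {τ : Finset (Finset (Fin m)) // IsT0OnFin m τ} →
      {τ : Finset (Finset (Fin (n + m))) // IsT0OnFin (n + m) τ} :=
    fun τ σ => ⟨joinF n m τ.1 σ.1, joinF_isT0 τ.2 σ.2⟩
  let g : Quot (R n) → Quot (R m) → Quot (R (n + m)) :=
    Quot.lift₂ (fun τ σ => Quot.mk (R (n + m)) (J τ σ))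
      (fun τ σ σ' hσ => Quot.sound
        (homeo_fwd τ.2.1.1 τ.2.1.1 (homeo_refl n τ.1) hσ))
      (fun τ τ' σ hτ => Quot.sound
        (homeo_fwd τ.2.1.1 τ'.2.1.1 hτ (homeo_refl m σ.1)))
  have hg : Function.Injective (fun p : Quot (R n) × Quot (R m) => g p.1 p.2) := by
    rintro ⟨q1, q2⟩ ⟨q1', q2'⟩ h
    simp only at h
    induction q1 using Quot.ind with | _ τ =>
    induction q2 using Quot.ind with | _ σ =>
    induction q1' using Quot.ind with | _ τ' =>
    induction q2' using Quot.ind with | _ σ' =>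
    have h2 : R (n + m) (J τ σ) (J τ' σ') :=
      ((hequiv (n + m)).eqvGen_iff).mp (Quot.eqvGen_exact h)
    have h3 := homeo_back τ.2.1 σ.2.1 τ'.2.1 σ'.2.1 h2
    exact Prod.ext (Quot.sound h3.1) (Quot.sound h3.2)
  have hcard : Nat.card (Quot (R n) × Quot (R m)) ≤ Nat.card (Quot (R (n + m))) :=
    Nat.card_le_card_of_injective _ hg
  rw [Nat.card_prod] at hcard
  exact hcard
end

section
/- For all nonnegative integers n and m, T₀(n + m) ≥ T₀(n) · T₀(m), where T₀(k) is the number of (labeled) T0 topologies on a fixed k-element set. -/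
/-- `T₀ k`: the number of labeled `T0` topologies on a fixed `k`-element set. -/
noncomputable def numLabeledT0 (k : ℕ) : ℕ :=
  Nat.card {τ : Finset (Finset (Fin k)) // IsT0OnFin k τ}

namespace T0Aux

variable {n m : ℕ}

/-- Join a subset of `Fin n` and a subset of `Fin m` to a subset of `Fin (n+m)`. -/
def join (A : Finset (Fin n)) (B : Finset (Fin m)) : Finset (Fin (n + m)) :=
  (A.disjSum B).map finSumFinEquiv.toEmbedding

lemma mem_join {A : Finset (Fin n)} {B : Finset (Fin m)} {x : Fin (n + m)} :
    x ∈ join A B ↔ finSumFinEquiv.symm x ∈ A.disjSum B :=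
  Finset.mem_map_equiv

lemma castAdd_mem_join {A : Finset (Fin n)} {B : Finset (Fin m)} {a : Fin n} :
    Fin.castAdd m a ∈ join A B ↔ a ∈ A := by
  rw [mem_join, finSumFinEquiv_symm_apply_castAdd, Finset.inl_mem_disjSum]

lemma natAdd_mem_join {A : Finset (Fin n)} {B : Finset (Fin m)} {b : Fin m} :
    Fin.natAdd n b ∈ join A B ↔ b ∈ B := by
  rw [mem_join, finSumFinEquiv_symm_apply_natAdd, Finset.inr_mem_disjSum]

lemma join_union (A A' : Finset (Fin n)) (B B' : Finset (Fin m)) :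
    join A B ∪ join A' B' = join (A ∪ A') (B ∪ B') := by
  ext x
  simp only [Finset.mem_union, mem_join]
  rcases h : finSumFinEquiv.symm x with a | b <;> simp

lemma join_inter (A A' : Finset (Fin n)) (B B' : Finset (Fin m)) :
    join A B ∩ join A' B' = join (A ∩ A') (B ∩ B') := by
  ext x
  simp only [Finset.mem_inter, mem_join]
  rcases h : finSumFinEquiv.symm x with a | b <;> simp

lemma join_empty : join (∅ : Finset (Fin n)) (∅ : Finset (Fin m)) = ∅ := by
  ext x
  simp only [mem_join, Finset.notMem_empty, iff_false]
  rcases h : finSumFinEquiv.symm x with a | b <;> simp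

lemma join_univ :
    join (Finset.univ : Finset (Fin n)) (Finset.univ : Finset (Fin m)) = Finset.univ := by
  ext x
  simp only [mem_join, Finset.mem_univ, iff_true]
  rcases h : finSumFinEquiv.symm x with a | b <;> simp

/-- The disjoint-union topology. -/
def joinTop (τ : Finset (Finset (Fin n))) (σ : Finset (Finset (Fin m))) :
    Finset (Finset (Fin (n + m))) :=
  (τ ×ˢ σ).image fun p => join p.1 p.2

lemma join_mem_joinTop {τ : Finset (Finset (Fin n))} {σ : Finset (Finset (Fin m))}
    {A : Finset (Fin n)} {B : Finset (Fin m)} (hA : A ∈ τ) (hB : B ∈ σ) :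
    join A B ∈ joinTop τ σ := by
  exact Finset.mem_image.mpr ⟨(A, B), Finset.mk_mem_product hA hB, rfl⟩

lemma joinTop_isT0 {τ : Finset (Finset (Fin n))} {σ : Finset (Finset (Fin m))}
    (hτ : IsT0OnFin n τ) (hσ : IsT0OnFin m σ) : IsT0OnFin (n + m) (joinTop τ σ) := by
  obtain ⟨⟨hτ0, hτu, hτU, hτI⟩, hτsep⟩ := hτ
  obtain ⟨⟨hσ0, hσu, hσU, hσI⟩, hσsep⟩ := hσ
  refine ⟨⟨?_, ?_, ?_, ?_⟩, ?_⟩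
  · rw [← join_empty]; exact join_mem_joinTop hτ0 hσ0
  · rw [← join_univ]; exact join_mem_joinTop hτu hσu
  · intro U hU V hV
    obtain ⟨⟨A, B⟩, hAB, rfl⟩ := Finset.mem_image.mp hU
    obtain ⟨⟨A', B'⟩, hAB', rfl⟩ := Finset.mem_image.mp hV
    obtain ⟨hA, hB⟩ := Finset.mem_product.mp hAB
    obtain ⟨hA', hB'⟩ := Finset.mem_product.mp hAB'
    rw [join_union]
    exact join_mem_joinTop (hτU _ hA _ hA') (hσU _ hB _ hB')
  · intro U hU V hV
    obtain ⟨⟨A, B⟩, hAB, rfl⟩ := Finset.mem_image.mp hU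
    obtain ⟨⟨A', B'⟩, hAB', rfl⟩ := Finset.mem_image.mp hV
    obtain ⟨hA, hB⟩ := Finset.mem_product.mp hAB
    obtain ⟨hA', hB'⟩ := Finset.mem_product.mp hAB'
    rw [join_inter]
    exact join_mem_joinTop (hτI _ hA _ hA') (hσI _ hB _ hB')
  · intro x y hxy
    have hxy' : finSumFinEquiv.symm x ≠ finSumFinEquiv.symm y := fun h =>
      hxy (finSumFinEquiv.symm.injective h)
    have hx : finSumFinEquiv (finSumFinEquiv.symm x) = x := finSumFinEquiv.apply_symm_apply x
    have hy : finSumFinEquiv (finSumFinEquiv.symm y) = y := finSumFinEquiv.apply_symm_apply y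
    rcases hxs : finSumFinEquiv.symm x with a | b <;> rcases hys : finSumFinEquiv.symm y with a' | b'
    · have hne : a ≠ a' := by rintro rfl; rw [hxs, hys] at hxy'; exact hxy' rfl
      obtain ⟨A, hA, hsep⟩ := hτsep a a' hne
      refine ⟨join A ∅, join_mem_joinTop hA hσ0, ?_⟩
      rw [hxs] at hx; rw [hys] at hy
      rw [← hx, ← hy]
      simpa only [mem_join, Equiv.symm_apply_apply, Finset.inl_mem_disjSum] using hsep
    · refine ⟨join Finset.univ ∅, join_mem_joinTop hτu hσ0, Or.inl ⟨?_, ?_⟩⟩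
      · rw [hxs] at hx; rw [← hx]
        simp [mem_join]
      · rw [hys] at hy; rw [← hy]
        simp [mem_join]
    · refine ⟨join Finset.univ ∅, join_mem_joinTop hτu hσ0, Or.inr ⟨?_, ?_⟩⟩
      · rw [hxs] at hx; rw [← hx]
        simp [mem_join]
      · rw [hys] at hy; rw [← hy]
        simp [mem_join]
    · have hne : b ≠ b' := by rintro rfl; rw [hxs, hys] at hxy'; exact hxy' rfl
      obtain ⟨B, hB, hsep⟩ := hσsep b b' hne
      refine ⟨join ∅ B, join_mem_joinTop hτ0 hB, ?_⟩
      rw [hxs] at hx; rw [hys] at hy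
      rw [← hx, ← hy]
      simpa only [mem_join, Equiv.symm_apply_apply, Finset.inr_mem_disjSum] using hsep

/-- Left restriction. -/
def restrictL (U : Finset (Fin (n + m))) : Finset (Fin n) :=
  Finset.univ.filter fun a => Fin.castAdd m a ∈ U

/-- Right restriction. -/
def restrictR (U : Finset (Fin (n + m))) : Finset (Fin m) :=
  Finset.univ.filter fun b => Fin.natAdd n b ∈ U

lemma restrictL_join (A : Finset (Fin n)) (B : Finset (Fin m)) : restrictL (join A B) = A := by
  ext a; simp [restrictL, castAdd_mem_join]

lemma restrictR_join (A : Finset (Fin n)) (B : Finset (Fin m)) : restrictR (join A B) = B := by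
  ext b; simp [restrictR, natAdd_mem_join]

lemma image_restrictL {τ : Finset (Finset (Fin n))} {σ : Finset (Finset (Fin m))}
    (hσ0 : (∅ : Finset (Fin m)) ∈ σ) : (joinTop τ σ).image restrictL = τ := by
  ext A
  constructor
  · intro hA
    obtain ⟨U, hU, rfl⟩ := Finset.mem_image.mp hA
    obtain ⟨⟨A', B'⟩, hAB, rfl⟩ := Finset.mem_image.mp hU
    rw [restrictL_join]
    exact (Finset.mem_product.mp hAB).1
  · intro hA
    refine Finset.mem_image.mpr ⟨join A ∅, join_mem_joinTop hA hσ0, restrictL_join A ∅⟩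

lemma image_restrictR {τ : Finset (Finset (Fin n))} {σ : Finset (Finset (Fin m))}
    (hτ0 : (∅ : Finset (Fin n)) ∈ τ) : (joinTop τ σ).image restrictR = σ := by
  ext B
  constructor
  · intro hB
    obtain ⟨U, hU, rfl⟩ := Finset.mem_image.mp hB
    obtain ⟨⟨A', B'⟩, hAB, rfl⟩ := Finset.mem_image.mp hU
    rw [restrictR_join]
    exact (Finset.mem_product.mp hAB).2
  · intro hB
    refine Finset.mem_image.mpr ⟨join ∅ B, join_mem_joinTop hτ0 hB, restrictR_join ∅ B⟩

end T0Aux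

/-- Super-multiplicativity for labeled `T0` topologies: `T₀(n + m) ≥ T₀(n) · T₀(m)`. -/
theorem numLabeledT0_supermultiplicative (n m : ℕ) :
    numLabeledT0 (n + m) ≥ numLabeledT0 n * numLabeledT0 m := by
  classical
  rw [numLabeledT0, numLabeledT0, numLabeledT0, ← Nat.card_prod]
  set f : ({τ : Finset (Finset (Fin n)) // IsT0OnFin n τ} ×
      {σ : Finset (Finset (Fin m)) // IsT0OnFin m σ}) →
      {τ : Finset (Finset (Fin (n + m))) // IsT0OnFin (n + m) τ} :=
    fun p => ⟨T0Aux.joinTop p.1.1 p.2.1, T0Aux.joinTop_isT0 p.1.2 p.2.2⟩ with hf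
  have hinj : Function.Injective f := by
    rintro ⟨⟨τ, hτ⟩, ⟨σ, hσ⟩⟩ ⟨⟨τ', hτ'⟩, ⟨σ', hσ'⟩⟩ h
    have hJ : T0Aux.joinTop τ σ = T0Aux.joinTop τ' σ' := congrArg Subtype.val h
    have h1 : τ = τ' := by
      have a1 := T0Aux.image_restrictL (τ := τ) (σ := σ) hσ.1.1
      have a2 := T0Aux.image_restrictL (τ := τ') (σ := σ') hσ'.1.1
      rw [← a1, ← a2, hJ]
    have h2 : σ = σ' := by
      have a1 := T0Aux.image_restrictR (τ := τ) (σ := σ) hτ.1.1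
      have a2 := T0Aux.image_restrictR (τ := τ') (σ := σ') hτ'.1.1
      rw [← a1, ← a2, hJ]
    subst h1; subst h2; rfl
  exact Nat.card_le_card_of_injective f hinj
end

section
/- For all integers n, m ≥ 0 and every integer i with 1 ≤ i ≤ n + m − 1, f(n + m) ≥ f(i) · f(n + m − i); consequently f(n + m) ≥ max{ f(i) · f(n + m − i) : 1 ≤ i ≤ n + m − 1 }, where f(k) is the number of homeomorphism classes of topologies on a k-element set. -/
namespace TopAux

open Finset

/- ### Basic properties of `HomeoRel` -/

lemma homeoRel_refl {k : ℕ} (τ : Finset (Finset (Fin k))) : HomeoRel k τ τ :=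
  ⟨id, Function.bijective_id, fun X => by simp⟩

lemma homeoRel_symm {k : ℕ} {τ1 τ2 : Finset (Finset (Fin k))}
    (h : HomeoRel k τ1 τ2) : HomeoRel k τ2 τ1 := by
  obtain ⟨φ, hb, hiff⟩ := h
  let e := Equiv.ofBijective φ hb
  refine ⟨e.symm, e.symm.bijective, fun X => ?_⟩
  have key : (X.image e.symm).image φ = X := by
    rw [Finset.image_image]
    have : (φ ∘ ⇑e.symm) = id := funext fun x => e.apply_symm_apply x
    rw [this, Finset.image_id]
  have := hiff (X.image e.symm)
  rw [key] at this
  exact this.symm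

lemma homeoRel_trans {k : ℕ} {τ1 τ2 τ3 : Finset (Finset (Fin k))}
    (h12 : HomeoRel k τ1 τ2) (h23 : HomeoRel k τ2 τ3) : HomeoRel k τ1 τ3 := by
  obtain ⟨φ, hb, hiff⟩ := h12
  obtain ⟨ψ, hb', hiff'⟩ := h23
  refine ⟨ψ ∘ φ, hb'.comp hb, fun X => ?_⟩
  rw [← Finset.image_image]
  exact (hiff' (X.image φ)).trans (hiff X)

lemma rel_equiv (k : ℕ) :
    Equivalence (fun τ1 τ2 : {τ : Finset (Finset (Fin k)) // IsTopOnFin k τ} =>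
      HomeoRel k τ1.1 τ2.1) :=
  ⟨fun τ => homeoRel_refl τ.1, homeoRel_symm, homeoRel_trans⟩

/- ### The glueing construction -/

section Glue

variable (a b : ℕ)

def inlE : Fin a ↪ Fin (a + b) :=
  (Function.Embedding.inl).trans finSumFinEquiv.toEmbedding

def inrE : Fin b ↪ Fin (a + b) :=
  (Function.Embedding.inr).trans finSumFinEquiv.toEmbedding

def Aset : Finset (Fin (a + b)) := Finset.univ.map (inlE a b)

def glue (τ : Finset (Finset (Fin a))) (σ : Finset (Finset (Fin b))) :
    Finset (Finset (Fin (a + b))) :=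
  τ.image (fun U => U.map (inlE a b)) ∪
    σ.image (fun V => Aset a b ∪ V.map (inrE a b))

variable {a b}

lemma inl_ne_inr (x : Fin a) (y : Fin b) : inlE a b x ≠ inrE a b y := by
  simp only [inlE, inrE, Function.Embedding.trans_apply, Equiv.coe_toEmbedding,
    Function.Embedding.inl_apply, Function.Embedding.inr_apply]
  intro h
  exact absurd (finSumFinEquiv.injective h) (by simp)

lemma mem_Aset {x : Fin (a + b)} : x ∈ Aset a b ↔ ∃ u, inlE a b u = x := by
  simp [Aset]

lemma exists_inr_of_not_mem_Aset {x : Fin (a + b)} (h : x ∉ Aset a b) :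
    ∃ y, inrE a b y = x := by
  rcases hx : finSumFinEquiv.symm x with u | y
  · exfalso
    apply h
    rw [mem_Aset]
    exact ⟨u, by simp [inlE, ← hx]⟩
  · exact ⟨y, by simp [inrE, ← hx]⟩

lemma disjoint_Aset (V : Finset (Fin b)) : Disjoint (Aset a b) (V.map (inrE a b)) := by
  rw [Finset.disjoint_left]
  intro x hxA hxV
  obtain ⟨u, hu⟩ := mem_Aset.mp hxA
  obtain ⟨y, _, hy⟩ := Finset.mem_map.mp hxV
  exact inl_ne_inr u y (hu.trans hy.symm)

lemma Aset_union_univ : Aset a b ∪ (Finset.univ : Finset (Fin b)).map (inrE a b)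
    = Finset.univ := by
  apply Finset.eq_univ_of_forall
  intro x
  by_cases h : x ∈ Aset a b
  · exact Finset.mem_union_left _ h
  · obtain ⟨y, hy⟩ := exists_inr_of_not_mem_Aset h
    exact Finset.mem_union_right _ (Finset.mem_map.mpr ⟨y, Finset.mem_univ _, hy⟩)

lemma map_inl_subset_Aset (U : Finset (Fin a)) : U.map (inlE a b) ⊆ Aset a b :=
  Finset.map_subset_map.mpr (Finset.subset_univ U)

lemma mem_glue {τ : Finset (Finset (Fin a))} {σ : Finset (Finset (Fin b))}
    {X : Finset (Fin (a + b))} :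
    X ∈ glue a b τ σ ↔ (∃ U ∈ τ, X = U.map (inlE a b)) ∨
      (∃ V ∈ σ, X = Aset a b ∪ V.map (inrE a b)) := by
  simp [glue, eq_comm]

lemma inter_map_eq_empty (U : Finset (Fin a)) (V : Finset (Fin b)) :
    U.map (inlE a b) ∩ V.map (inrE a b) = ∅ :=
  Finset.disjoint_iff_inter_eq_empty.mp
    ((disjoint_Aset V).mono_left (map_inl_subset_Aset U))

lemma isTop_glue {τ : Finset (Finset (Fin a))} {σ : Finset (Finset (Fin b))}
    (hτ : IsTopOnFin a τ) (hσ : IsTopOnFin b σ) :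
    IsTopOnFin (a + b) (glue a b τ σ) := by
  obtain ⟨hτ0, hτu, hτcup, hτcap⟩ := hτ
  obtain ⟨hσ0, hσu, hσcup, hσcap⟩ := hσ
  refine ⟨?_, ?_, ?_, ?_⟩
  · exact mem_glue.mpr (Or.inl ⟨∅, hτ0, by simp⟩)
  · exact mem_glue.mpr (Or.inr ⟨Finset.univ, hσu, Aset_union_univ.symm⟩)
  · intro X hX Y hY
    rcases mem_glue.mp hX with ⟨U, hU, rfl⟩ | ⟨V, hV, rfl⟩ <;>
      rcases mem_glue.mp hY with ⟨U', hU', rfl⟩ | ⟨V', hV', rfl⟩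
    · exact mem_glue.mpr (Or.inl ⟨U ∪ U', hτcup U hU U' hU', (Finset.map_union _ _).symm⟩)
    · refine mem_glue.mpr (Or.inr ⟨V', hV', ?_⟩)
      rw [← Finset.union_assoc, Finset.union_eq_right.mpr (map_inl_subset_Aset U)]
    · refine mem_glue.mpr (Or.inr ⟨V, hV, ?_⟩)
      rw [Finset.union_right_comm, Finset.union_eq_left.mpr (map_inl_subset_Aset U')]
    · refine mem_glue.mpr (Or.inr ⟨V ∪ V', hσcup V hV V' hV', ?_⟩)
      rw [Finset.map_union, Finset.union_union_union_comm, Finset.union_self]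
  · intro X hX Y hY
    rcases mem_glue.mp hX with ⟨U, hU, rfl⟩ | ⟨V, hV, rfl⟩ <;>
      rcases mem_glue.mp hY with ⟨U', hU', rfl⟩ | ⟨V', hV', rfl⟩
    · exact mem_glue.mpr (Or.inl ⟨U ∩ U', hτcap U hU U' hU', (Finset.map_inter _ _).symm⟩)
    · refine mem_glue.mpr (Or.inl ⟨U, hU, ?_⟩)
      rw [Finset.inter_union_distrib_left,
        Finset.inter_eq_left.mpr (map_inl_subset_Aset U),
        inter_map_eq_empty U V', Finset.union_empty]
    · refine mem_glue.mpr (Or.inl ⟨U', hU', ?_⟩)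
      rw [Finset.inter_comm, Finset.inter_union_distrib_left,
        Finset.inter_eq_left.mpr (map_inl_subset_Aset U'),
        inter_map_eq_empty U' V, Finset.union_empty]
    · refine mem_glue.mpr (Or.inr ⟨V ∩ V', hσcap V hV V' hV', ?_⟩)
      rw [Finset.map_inter, Finset.union_inter_distrib_left]

section Images

variable {ψ : Fin (a + b) → Fin (a + b)} {φa : Fin a → Fin a} {φb : Fin b → Fin b}

lemma image_map_left (hal : ∀ x, ψ (inlE a b x) = inlE a b (φa x)) (U : Finset (Fin a)) :
    (U.map (inlE a b)).image ψ = (U.image φa).map (inlE a b) := by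
  rw [Finset.map_eq_image, Finset.map_eq_image, Finset.image_image, Finset.image_image]
  exact Finset.image_congr (fun x _ => hal x)

lemma image_map_right (har : ∀ y, ψ (inrE a b y) = inrE a b (φb y)) (V : Finset (Fin b)) :
    (V.map (inrE a b)).image ψ = (V.image φb).map (inrE a b) := by
  rw [Finset.map_eq_image, Finset.map_eq_image, Finset.image_image, Finset.image_image]
  exact Finset.image_congr (fun y _ => har y)

lemma image_Aset (hal : ∀ x, ψ (inlE a b x) = inlE a b (φa x))
    (hsa : Function.Surjective φa) : (Aset a b).image ψ = Aset a b := by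
  rw [Aset, image_map_left hal, Finset.image_univ_of_surjective hsa]

lemma image_mem_glue {τ1 τ2 : Finset (Finset (Fin a))} {σ1 σ2 : Finset (Finset (Fin b))}
    (hal : ∀ x, ψ (inlE a b x) = inlE a b (φa x))
    (har : ∀ y, ψ (inrE a b y) = inrE a b (φb y))
    (hsa : Function.Surjective φa)
    (h1 : ∀ U ∈ τ1, U.image φa ∈ τ2) (h2 : ∀ V ∈ σ1, V.image φb ∈ σ2) :
    ∀ X ∈ glue a b τ1 σ1, X.image ψ ∈ glue a b τ2 σ2 := by
  intro X hX
  rcases mem_glue.mp hX with ⟨U, hU, rfl⟩ | ⟨V, hV, rfl⟩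
  · exact mem_glue.mpr (Or.inl ⟨U.image φa, h1 U hU, image_map_left hal U⟩)
  · refine mem_glue.mpr (Or.inr ⟨V.image φb, h2 V hV, ?_⟩)
    rw [Finset.image_union, image_Aset hal hsa, image_map_right har V]

end Images

lemma homeoRel_glue {τ1 τ2 : Finset (Finset (Fin a))} {σ1 σ2 : Finset (Finset (Fin b))}
    (h1 : HomeoRel a τ1 τ2) (h2 : HomeoRel b σ1 σ2) :
    HomeoRel (a + b) (glue a b τ1 σ1) (glue a b τ2 σ2) := by
  obtain ⟨φa, hba, hia⟩ := h1
  obtain ⟨φb, hbb, hib⟩ := h2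
  let ea := Equiv.ofBijective φa hba
  let eb := Equiv.ofBijective φb hbb
  let E : Fin (a + b) ≃ Fin (a + b) :=
    finSumFinEquiv.symm.trans ((ea.sumCongr eb).trans finSumFinEquiv)
  have hal : ∀ x, E (inlE a b x) = inlE a b (φa x) := by
    intro x; simp [E, inlE, ea]
  have har : ∀ y, E (inrE a b y) = inrE a b (φb y) := by
    intro y; simp [E, inrE, eb]
  have hal' : ∀ x, E.symm (inlE a b x) = inlE a b (ea.symm x) := by
    intro x
    apply E.injective
    rw [E.apply_symm_apply, hal]
    have hx : φa (ea.symm x) = x := ea.apply_symm_apply x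
    rw [hx]
  have har' : ∀ y, E.symm (inrE a b y) = inrE a b (eb.symm y) := by
    intro y
    apply E.injective
    rw [E.apply_symm_apply, har]
    have hy : φb (eb.symm y) = y := eb.apply_symm_apply y
    rw [hy]
  have hia' : ∀ W ∈ τ2, W.image ea.symm ∈ τ1 := by
    intro W hW
    apply (hia (W.image ea.symm)).mp
    have : (W.image ⇑ea.symm).image φa = W := by
      rw [Finset.image_image]
      have : (φa ∘ ⇑ea.symm) = id := funext fun x => ea.apply_symm_apply x
      rw [this, Finset.image_id]
    rwa [this]
  have hib' : ∀ W ∈ σ2, W.image eb.symm ∈ σ1 := by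
    intro W hW
    apply (hib (W.image eb.symm)).mp
    have : (W.image ⇑eb.symm).image φb = W := by
      rw [Finset.image_image]
      have : (φb ∘ ⇑eb.symm) = id := funext fun x => eb.apply_symm_apply x
      rw [this, Finset.image_id]
    rwa [this]
  refine ⟨E, E.bijective, fun X => ⟨fun h => ?_, fun h => ?_⟩⟩
  · have hx := image_mem_glue hal' har' ea.symm.surjective hia' hib' (X.image E) h
    have hXX : (X.image E).image E.symm = X := by
      rw [Finset.image_image]
      simp
    rwa [hXX] at hx
  · exact image_mem_glue hal har hba.surjective
      (fun U hU => (hia U).mpr hU) (fun V hV => (hib V).mpr hV) X h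


lemma map_inl_injective : Function.Injective (fun U : Finset (Fin a) => U.map (inlE a b)) :=
  fun _ _ h => Finset.map_injective _ h

lemma glue_left_mem {τ : Finset (Finset (Fin a))} {σ : Finset (Finset (Fin b))}
    (hτu : (Finset.univ : Finset (Fin a)) ∈ τ) (W : Finset (Fin a)) :
    W.map (inlE a b) ∈ glue a b τ σ ↔ W ∈ τ := by
  constructor
  · intro h
    rcases mem_glue.mp h with ⟨U, hU, hE⟩ | ⟨V, hV, hE⟩
    · rwa [Finset.map_injective _ hE]
    · have hsub : Aset a b ⊆ W.map (inlE a b) := by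
        rw [hE]; exact Finset.subset_union_left
      have heq : W.map (inlE a b) = Aset a b :=
        Finset.Subset.antisymm (map_inl_subset_Aset W) hsub
      have : W = Finset.univ := Finset.map_injective _ heq
      rwa [this]
  · intro h
    exact mem_glue.mpr (Or.inl ⟨W, h, rfl⟩)

lemma glue_right_mem {τ : Finset (Finset (Fin a))} {σ : Finset (Finset (Fin b))}
    (hσ0 : (∅ : Finset (Fin b)) ∈ σ) (V : Finset (Fin b)) :
    Aset a b ∪ V.map (inrE a b) ∈ glue a b τ σ ↔ V ∈ σ := by
  constructor
  · intro h
    rcases mem_glue.mp h with ⟨U, hU, hE⟩ | ⟨V', hV', hE⟩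
    · have hsub : V.map (inrE a b) ⊆ Aset a b := by
        calc V.map (inrE a b) ⊆ Aset a b ∪ V.map (inrE a b) := Finset.subset_union_right
          _ = U.map (inlE a b) := hE
          _ ⊆ Aset a b := map_inl_subset_Aset U
      have hVe : V.map (inrE a b) = ∅ := (disjoint_Aset V).symm.eq_bot_of_le hsub
      have : V = ∅ := Finset.map_eq_empty.mp hVe
      rw [this]; exact hσ0
    · have h1 : V.map (inrE a b) = V'.map (inrE a b) := by
        rw [← Finset.union_sdiff_cancel_left (disjoint_Aset V),
          ← Finset.union_sdiff_cancel_left (disjoint_Aset V'), hE]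
      rwa [Finset.map_injective _ h1]
  · intro h
    exact mem_glue.mpr (Or.inr ⟨V, h, rfl⟩)

lemma homeoRel_of_glue {τ1 τ2 : Finset (Finset (Fin a))} {σ1 σ2 : Finset (Finset (Fin b))}
    (hτ1 : IsTopOnFin a τ1) (hτ2 : IsTopOnFin a τ2)
    (hσ1 : IsTopOnFin b σ1) (hσ2 : IsTopOnFin b σ2)
    (h : HomeoRel (a + b) (glue a b τ1 σ1) (glue a b τ2 σ2)) :
    HomeoRel a τ1 τ2 ∧ HomeoRel b σ1 σ2 := by
  obtain ⟨φ, hbij, hiff⟩ := h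
  have hAmem1 : Aset a b ∈ glue a b τ1 σ1 :=
    mem_glue.mpr (Or.inr ⟨∅, hσ1.1, by simp⟩)
  have hA2 : (Aset a b).image φ ∈ glue a b τ2 σ2 := (hiff _).mpr hAmem1
  have hcard : ((Aset a b).image φ).card = a := by
    rw [Finset.card_image_of_injective _ hbij.injective, Aset, Finset.card_map]
    simp
  have hAeq : (Aset a b).image φ = Aset a b := by
    rcases mem_glue.mp hA2 with ⟨U, hU, hE⟩ | ⟨V, hV, hE⟩
    · have hcU : U.card = a := by
        rw [hE, Finset.card_map] at hcard; exact hcard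
      have : U = Finset.univ := Finset.eq_univ_of_card U (by simpa using hcU)
      rw [hE, this]; rfl
    · have hcV : a + V.card = a := by
        rw [hE, Finset.card_union_of_disjoint (disjoint_Aset V), Finset.card_map] at hcard
        simpa [Aset] using hcard
      have : V = ∅ := by
        rw [← Finset.card_eq_zero]; omega
      rw [hE, this]; simp
  -- the left part
  have hmemA : ∀ x : Fin a, ∃ u, inlE a b u = φ (inlE a b x) := by
    intro x
    apply mem_Aset.mp
    rw [← hAeq]
    exact Finset.mem_image_of_mem φ (mem_Aset.mpr ⟨x, rfl⟩)
  choose φa hφa using hmemA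
  have hal : ∀ x, φ (inlE a b x) = inlE a b (φa x) := fun x => (hφa x).symm
  have hinja : Function.Injective φa := by
    intro x x' hx
    have h1 : φ (inlE a b x) = φ (inlE a b x') := by rw [hal, hal, hx]
    exact (inlE a b).injective (hbij.injective h1)
  have hbija : Function.Bijective φa := Finite.injective_iff_bijective.mp hinja
  -- the right part
  have hmemB : ∀ y : Fin b, ∃ y', inrE a b y' = φ (inrE a b y) := by
    intro y
    apply exists_inr_of_not_mem_Aset
    intro hmem
    rw [← hAeq] at hmem
    obtain ⟨z, hz, hz'⟩ := Finset.mem_image.mp hmem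
    have : z = inrE a b y := hbij.injective hz'
    rw [this] at hz
    obtain ⟨u, hu⟩ := mem_Aset.mp hz
    exact inl_ne_inr u y hu
  choose φb hφb using hmemB
  have har : ∀ y, φ (inrE a b y) = inrE a b (φb y) := fun y => (hφb y).symm
  have hinjb : Function.Injective φb := by
    intro y y' hy
    have h1 : φ (inrE a b y) = φ (inrE a b y') := by rw [har, har, hy]
    exact (inrE a b).injective (hbij.injective h1)
  have hbijb : Function.Bijective φb := Finite.injective_iff_bijective.mp hinjb
  refine ⟨⟨φa, hbija, fun U => ?_⟩, ⟨φb, hbijb, fun V => ?_⟩⟩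
  · have h1 := hiff (U.map (inlE a b))
    rw [image_map_left hal U, glue_left_mem hτ2.2.1, glue_left_mem hτ1.2.1] at h1
    exact h1
  · have h2 := hiff (Aset a b ∪ V.map (inrE a b))
    rw [Finset.image_union, hAeq, image_map_right har V,
      glue_right_mem hσ2.1, glue_right_mem hσ1.1] at h2
    exact h2

end Glue

/- ### Counting -/

def QT (k : ℕ) :=
  Quot (fun τ1 τ2 : {τ : Finset (Finset (Fin k)) // IsTopOnFin k τ} =>
    HomeoRel k τ1.1 τ2.1)

instance (k : ℕ) : Finite (QT k) := Quot.finite _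

def mk2 (a b : ℕ) (τ : {τ : Finset (Finset (Fin a)) // IsTopOnFin a τ})
    (σ : {σ : Finset (Finset (Fin b)) // IsTopOnFin b σ}) : QT (a + b) :=
  Quot.mk _ ⟨glue a b τ.1 σ.1, isTop_glue τ.2 σ.2⟩

lemma mk2_sound {a b : ℕ} (τ1 τ2 : {τ : Finset (Finset (Fin a)) // IsTopOnFin a τ})
    (σ1 σ2 : {σ : Finset (Finset (Fin b)) // IsTopOnFin b σ})
    (h1 : HomeoRel a τ1.1 τ2.1) (h2 : HomeoRel b σ1.1 σ2.1) :
    mk2 a b τ1 σ1 = mk2 a b τ2 σ2 :=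
  Quot.sound (homeoRel_glue h1 h2)

def F (a b : ℕ) : QT a → QT b → QT (a + b) := by
  refine Quot.lift (fun τ => Quot.lift (mk2 a b τ) ?_) ?_
  · exact fun σ1 σ2 h => mk2_sound _ _ _ _ (homeoRel_refl _) h
  · intro τ1 τ2 h
    funext q
    induction q using Quot.ind with
    | _ σ => exact mk2_sound _ _ _ _ h (homeoRel_refl _)

lemma F_inj (a b : ℕ) : Function.Injective (fun p : QT a × QT b => F a b p.1 p.2) := by
  rintro ⟨q1, q2⟩ ⟨q3, q4⟩ h
  induction q1 using Quot.ind with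
  | _ τ1 =>
  induction q2 using Quot.ind with
  | _ σ1 =>
  induction q3 using Quot.ind with
  | _ τ2 =>
  induction q4 using Quot.ind with
  | _ σ2 =>
  simp only [F, mk2] at h
  have h' := Quot.eq.mp h
  have hrel := ((rel_equiv (a + b)).eqvGen_iff).mp h'
  obtain ⟨hL, hR⟩ := homeoRel_of_glue τ1.2 τ2.2 σ1.2 σ2.2 hrel
  exact Prod.ext (Quot.sound hL) (Quot.sound hR)

lemma mul_le_card (a b : ℕ) :
    numUnlabeledTop a * numUnlabeledTop b ≤ numUnlabeledTop (a + b) := by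
  calc numUnlabeledTop a * numUnlabeledTop b = Nat.card (QT a × QT b) := by
        rw [Nat.card_prod]; rfl
    _ ≤ Nat.card (QT (a + b)) := Nat.card_le_card_of_injective _ (F_inj a b)
    _ = numUnlabeledTop (a + b) := rfl

end TopAux

/-- For all `n, m ≥ 0` and every `i` with `1 ≤ i ≤ n + m − 1`,
`f(n + m) ≥ f(i) · f(n + m − i)`; consequently `f(n + m)` dominates the maximum of
`f(i) · f(n + m − i)` over `1 ≤ i ≤ n + m − 1`. -/
theorem numUnlabeledTop_max_lower_bound (n m : ℕ) :
    (∀ i : ℕ, 1 ≤ i → i ≤ n + m - 1 →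
      numUnlabeledTop (n + m) ≥ numUnlabeledTop i * numUnlabeledTop (n + m - i)) ∧
    numUnlabeledTop (n + m) ≥
      (Finset.Icc 1 (n + m - 1)).sup
        (fun i => numUnlabeledTop i * numUnlabeledTop (n + m - i)) := by
  have key : ∀ i : ℕ, 1 ≤ i → i ≤ n + m - 1 →
      numUnlabeledTop i * numUnlabeledTop (n + m - i) ≤ numUnlabeledTop (n + m) := by
    intro i h1 h2
    have hi : i ≤ n + m := le_trans h2 (Nat.sub_le _ _)
    have hsum : i + (n + m - i) = n + m := Nat.add_sub_cancel' hi
    calc numUnlabeledTop i * numUnlabeledTop (n + m - i)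
        ≤ numUnlabeledTop (i + (n + m - i)) := TopAux.mul_le_card _ _
      _ = numUnlabeledTop (n + m) := by rw [hsum]
  refine ⟨key, ?_⟩
  apply Finset.sup_le
  intro i hi
  rw [Finset.mem_Icc] at hi
  exact key i hi.1 hi.2
end
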